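/- arXiv:2103.00704 — 4 statements merged into one kernel-verified Lean document; each statement's English description precedes it below -/
import Mathlib

section
/- Let U, Ũ ∈ ℝ^{d×k} have orthonormal columns and let O* minimize ‖U − ŨO‖_F over orthogonal O. Define d(U,Ũ) = ‖U − ŨO*‖₂. Then d(U,Ũ) = sqrt(2 − 2·sqrt(1 − dist(U,Ũ)²)), where dist(U,Ũ) = ‖UUᵀ − ŨŨᵀ‖₂. -/
/-!
Put `C = Ũ O*` and `N = Cᵀ U`. For orthogonal `O`, `‖U - C O‖_F² = ‖U‖_F² + k - 2 tr (Oᵀ N)`, so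
optimality of `O*` says `tr (Oᵀ N) ≤ tr N` for every orthogonal `O`; testing this against
Householder reflections and products of two of them shows that `N` is symmetric positive
semidefinite. As `(U - C)ᵀ (U - C) = 2 - 2 N`, `d(U, Ũ)² = 2 - 2 μ` for the least eigenvalue
`μ ≥ 0` of `N`. On the other side
`‖(U Uᵀ - C Cᵀ) v‖² = ‖(1 - C Cᵀ) U Uᵀ v‖² + ‖Cᵀ (1 - U Uᵀ) v‖²`, and the two summands are at most
`(1 - μ²) ‖Uᵀ v‖²` and `(1 - μ²) ‖(1 - U Uᵀ) v‖²`, which add up to `(1 - μ²) ‖v‖²`; equality holds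
at `v = U x` for an eigenvector `x` of `μ`. Hence `dist(U, Ũ)² = 1 - μ²`.
-/

open Matrix Finset

/-- Spectral (operator) norm of a real matrix. -/
noncomputable def specNorm {a b : ℕ} (A : Matrix (Fin a) (Fin b) ℝ) : ℝ :=
  ‖LinearMap.toContinuousLinearMap (Matrix.toEuclideanLin A)‖

/-- Frobenius norm of a real matrix. -/
noncomputable def frobNorm {a b : ℕ} (A : Matrix (Fin a) (Fin b) ℝ) : ℝ :=
  Real.sqrt (∑ i, ∑ j, (A i j) ^ 2)

section DotProduct

variable {m n : Type*} [Fintype m] [Fintype n]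

lemma dotProduct_self_nonneg (v : n → ℝ) : 0 ≤ v ⬝ᵥ v := by
  simpa using dotProduct_star_self_nonneg v

lemma sq_dotProduct_le (u v : n → ℝ) : (u ⬝ᵥ v) ^ 2 ≤ (u ⬝ᵥ u) * (v ⬝ᵥ v) := by
  simpa only [dotProduct, ← sq] using Finset.sum_mul_sq_le_sq_mul_sq univ u v

lemma mulVec_dotProduct (A : Matrix m n ℝ) (v : n → ℝ) (w : m → ℝ) :
    A *ᵥ v ⬝ᵥ w = v ⬝ᵥ Aᵀ *ᵥ w := by
  rw [dotProduct_transpose_mulVec, dotProduct_comm]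

lemma mulVec_dotProduct_mulVec_self (A : Matrix m n ℝ) (v : n → ℝ) :
    A *ᵥ v ⬝ᵥ A *ᵥ v = v ⬝ᵥ (Aᵀ * A) *ᵥ v := by
  rw [mulVec_dotProduct, mulVec_mulVec]

lemma mulVec_dotProduct_mulVec_self_of_isometry [DecidableEq n] {V : Matrix m n ℝ}
    (hV : Vᵀ * V = 1) (v : n → ℝ) : V *ᵥ v ⬝ᵥ V *ᵥ v = v ⬝ᵥ v := by
  rw [mulVec_dotProduct_mulVec_self, hV, one_mulVec]

end DotProduct

section SpecNorm

variable {a b : ℕ}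

lemma norm_toLp_sq (v : Fin b → ℝ) : ‖WithLp.toLp 2 v‖ ^ 2 = v ⬝ᵥ v := by
  rw [EuclideanSpace.real_norm_sq_eq]
  simp [dotProduct, sq]

lemma specNorm_nonneg (A : Matrix (Fin a) (Fin b) ℝ) : 0 ≤ specNorm A := norm_nonneg _

lemma specNorm_zero : specNorm (0 : Matrix (Fin a) (Fin b) ℝ) = 0 := by
  simp [specNorm]

lemma mulVec_dotProduct_mulVec_self_le (A : Matrix (Fin a) (Fin b) ℝ) (v : Fin b → ℝ) :
    A *ᵥ v ⬝ᵥ A *ᵥ v ≤ specNorm A ^ 2 * (v ⬝ᵥ v) := by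
  rw [← norm_toLp_sq, ← norm_toLp_sq, ← mul_pow]
  gcongr
  exact (LinearMap.toContinuousLinearMap (toEuclideanLin A)).le_opNorm _

lemma specNorm_sq_le {A : Matrix (Fin a) (Fin b) ℝ} {c : ℝ} (hc : 0 ≤ c)
    (h : ∀ v, A *ᵥ v ⬝ᵥ A *ᵥ v ≤ c * (v ⬝ᵥ v)) : specNorm A ^ 2 ≤ c := by
  rw [← Real.sq_sqrt hc]
  refine pow_le_pow_left₀ (norm_nonneg _) ?_ 2
  refine (LinearMap.toContinuousLinearMap (toEuclideanLin A)).opNorm_le_bound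
    (Real.sqrt_nonneg c) fun x => ?_
  obtain ⟨v, rfl⟩ : ∃ v, x = WithLp.toLp 2 v := ⟨x.ofLp, rfl⟩
  have hv := h v
  rw [← norm_toLp_sq, ← norm_toLp_sq, ← Real.sq_sqrt hc, ← mul_pow] at hv
  exact le_of_sq_le_sq hv (by positivity)

lemma exists_mulVec_dotProduct_mulVec_self_eq [NeZero b] (A : Matrix (Fin a) (Fin b) ℝ) :
    ∃ v, v ⬝ᵥ v = 1 ∧ A *ᵥ v ⬝ᵥ A *ᵥ v = specNorm A ^ 2 := by
  set f := LinearMap.toContinuousLinearMap (toEuclideanLin A)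
  obtain ⟨x, hx, hfx⟩ : ∃ x ∈ Metric.sphere (0 : EuclideanSpace ℝ (Fin b)) 1, ‖f x‖ = ‖f‖ := by
    have := ((isCompact_sphere 0 1).image f.continuous.norm).sSup_mem
      ((NormedSpace.sphere_nonempty.mpr zero_le_one).image _)
    rwa [f.sSup_sphere_eq_norm] at this
  refine ⟨x.ofLp, ?_, ?_⟩
  · rw [← norm_toLp_sq, WithLp.toLp_ofLp, mem_sphere_zero_iff_norm.mp hx, one_pow]
  · rw [← norm_toLp_sq]
    exact congrArg (· ^ 2) hfx

open scoped Matrix.Norms.L2Operator in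
lemma specNorm_transpose (A : Matrix (Fin a) (Fin b) ℝ) : specNorm Aᵀ = specNorm A := by
  change ‖Aᵀ‖ = ‖A‖
  simpa [conjTranspose_eq_transpose_of_trivial] using l2_opNorm_conjTranspose A

end SpecNorm

section Householder

variable {n : Type*} [Fintype n] [DecidableEq n]

/-- The reflection in the hyperplane orthogonal to `v`; for `v = 0` the junk value `2 / 0 = 0`
makes it the identity, which is still orthogonal. -/
noncomputable def householder (v : n → ℝ) : Matrix n n ℝ :=
  1 - (2 / (v ⬝ᵥ v)) • vecMulVec v v

lemma householder_transpose (v : n → ℝ) : (householder v)ᵀ = householder v := by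
  simp [householder, transpose_vecMulVec]

lemma householder_mul_self (v : n → ℝ) : householder v * householder v = 1 := by
  have hc : 2 / (v ⬝ᵥ v) * (2 / (v ⬝ᵥ v)) * (v ⬝ᵥ v) = 2 * (2 / (v ⬝ᵥ v)) := by
    rcases eq_or_ne (v ⬝ᵥ v) 0 with h | h
    · simp [h]
    · field_simp
  simp only [householder, sub_mul, mul_sub, one_mul, mul_one, smul_mul_smul,
    vecMulVec_mul_vecMulVec, vecMulVec_smul, smul_smul, hc]
  module

lemma householder_mulVec (v w : n → ℝ) :
    householder v *ᵥ w = w - (2 / (v ⬝ᵥ v) * (v ⬝ᵥ w)) • v := by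
  simp [householder, sub_mulVec, smul_mulVec, vecMulVec_mulVec, smul_smul]

lemma trace_householder_mul (v : n → ℝ) (M : Matrix n n ℝ) :
    trace (householder v * M) = trace M - 2 / (v ⬝ᵥ v) * (v ⬝ᵥ M *ᵥ v) := by
  simp [householder, sub_mul, vecMulVec_mul, trace_vecMulVec, dotProduct_mulVec, dotProduct_comm]

def TraceMaximal (N : Matrix n n ℝ) : Prop :=
  ∀ O : Matrix n n ℝ, Oᵀ * O = 1 → trace (Oᵀ * N) ≤ trace N

namespace TraceMaximal

variable {N : Matrix n n ℝ} (hN : TraceMaximal N)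
include hN

lemma dotProduct_mulVec_nonneg (v : n → ℝ) : 0 ≤ v ⬝ᵥ N *ᵥ v := by
  have h := hN (householder v) (by rw [householder_transpose, householder_mul_self])
  rw [householder_transpose, trace_householder_mul] at h
  rcases (dotProduct_self_nonneg v).eq_or_lt with hv | hv
  · simp [dotProduct_self_eq_zero.mp hv.symm]
  · have : 0 ≤ 2 / (v ⬝ᵥ v) * (v ⬝ᵥ N *ᵥ v) := by linarith
    exact nonneg_of_mul_nonneg_right this (by positivity)

/-- The trace inequality for the rotation `householder v * householder u`. -/
lemma householder_mul_householder_le (u v : n → ℝ) :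
    2 / (u ⬝ᵥ u) * (2 / (v ⬝ᵥ v)) * (u ⬝ᵥ v) * (v ⬝ᵥ N *ᵥ u) ≤
      2 / (u ⬝ᵥ u) * (u ⬝ᵥ N *ᵥ u) + 2 / (v ⬝ᵥ v) * (v ⬝ᵥ N *ᵥ v) := by
  have h := hN (householder v * householder u) (by
    rw [transpose_mul, householder_transpose, householder_transpose, Matrix.mul_assoc,
      ← Matrix.mul_assoc (householder v), householder_mul_self, Matrix.one_mul,
      householder_mul_self])
  rw [transpose_mul, householder_transpose, householder_transpose, Matrix.mul_assoc,
    trace_householder_mul, ← mulVec_mulVec, householder_mulVec, trace_householder_mul] at h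
  simp only [dotProduct_sub, dotProduct_smul, smul_eq_mul] at h
  linarith

lemma transpose_eq : Nᵀ = N := by
  ext i j
  rcases eq_or_ne j i with rfl | hij
  · rfl
  -- rotations in the `(i, j)`-plane of angle `2 arctan t`
  have hquad (t : ℝ) : 0 ≤ (N i i + N j j) * (t * t) + (N i j - N j i) * t + 0 := by
    have h := hN.householder_mul_householder_le (Pi.single i 1) (Pi.single i 1 + t • Pi.single j 1)
    simp only [dotProduct_single, Pi.single_eq_same, mul_one, div_one, dotProduct_add,
      Pi.add_apply, Pi.smul_apply, ne_eq, hij.symm, not_false_eq_true, Pi.single_eq_of_ne,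
      smul_eq_mul, mul_zero, add_zero, dotProduct_smul, hij, zero_add, mulVec_single,
      MulOpposite.op_one, one_smul, add_dotProduct, single_dotProduct, col_apply, one_mul,
      smul_dotProduct, mulVec_add, mulVec_smul] at h
    field_simp at h
    linarith
  rw [transpose_apply]
  have := discrim_le_zero hquad
  rw [discrim] at this
  nlinarith [sq_nonneg (N i j - N j i)]

end TraceMaximal

end Householder

section Rayleigh

variable {n : Type*} [Fintype n] {N : Matrix n n ℝ} {μ : ℝ}

lemma mulVec_eq_smul_of_dotProduct_mulVec_eq [DecidableEq n] (hN : Nᵀ = N)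
    (hμ : ∀ v, μ * (v ⬝ᵥ v) ≤ v ⬝ᵥ N *ᵥ v) {x : n → ℝ} (hx : x ⬝ᵥ N *ᵥ x = μ * (x ⬝ᵥ x)) :
    N *ᵥ x = μ • x := by
  have hpsd : (N - μ • 1).PosSemidef := by
    refine .of_dotProduct_mulVec_nonneg ?_ fun v => ?_
    · simp [IsHermitian, conjTranspose_eq_transpose_of_trivial, hN]
    · simpa [sub_mulVec, dotProduct_sub, smul_mulVec] using hμ v
  have := (hpsd.dotProduct_mulVec_zero_iff x).mp (by simp [sub_mulVec, smul_mulVec, hx])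
  rwa [sub_mulVec, smul_mulVec, one_mulVec, sub_eq_zero] at this

lemma sq_mul_le_mulVec_dotProduct_mulVec_self (hμ0 : 0 ≤ μ)
    (hμ : ∀ v, μ * (v ⬝ᵥ v) ≤ v ⬝ᵥ N *ᵥ v) (v : n → ℝ) :
    μ ^ 2 * (v ⬝ᵥ v) ≤ N *ᵥ v ⬝ᵥ N *ᵥ v := by
  have hcs := sq_dotProduct_le v (N *ᵥ v)
  rcases (dotProduct_self_nonneg v).eq_or_lt with h0 | hpos
  · rw [← h0, mul_zero]
    exact dotProduct_self_nonneg _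
  · have : (μ * (v ⬝ᵥ v)) ^ 2 ≤ (v ⬝ᵥ N *ᵥ v) ^ 2 := pow_le_pow_left₀ (by positivity) (hμ v) 2
    nlinarith

end Rayleigh

section Projection

variable {m n : Type*} [Fintype m] [Fintype n] [DecidableEq m] [DecidableEq n]

omit [DecidableEq m] in
lemma isIdempotentElem_mul_transpose {W : Matrix m n ℝ} (hW : Wᵀ * W = 1) :
    IsIdempotentElem (W * Wᵀ) := by
  rw [IsIdempotentElem, Matrix.mul_assoc, ← Matrix.mul_assoc Wᵀ, hW, Matrix.one_mul]

omit [Fintype m] [DecidableEq n] in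
lemma transpose_one_sub_mul_transpose (W : Matrix m n ℝ) : (1 - W * Wᵀ)ᵀ = 1 - W * Wᵀ := by
  simp [transpose_sub]

lemma one_sub_mul_transpose_mulVec_dotProduct_self {W : Matrix m n ℝ} (hW : Wᵀ * W = 1)
    (x : m → ℝ) :
    (1 - W * Wᵀ) *ᵥ x ⬝ᵥ (1 - W * Wᵀ) *ᵥ x = x ⬝ᵥ x - Wᵀ *ᵥ x ⬝ᵥ Wᵀ *ᵥ x := by
  rw [mulVec_dotProduct_mulVec_self, transpose_one_sub_mul_transpose,
    (isIdempotentElem_mul_transpose hW).one_sub.eq, mulVec_dotProduct_mulVec_self Wᵀ,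
    transpose_transpose, sub_mulVec, one_mulVec, dotProduct_sub]

lemma one_sub_mul_transpose_mulVec_mulVec_dotProduct_self_le {V W : Matrix m n ℝ}
    (hV : Vᵀ * V = 1) (hW : Wᵀ * W = 1) {μ : ℝ}
    (hμ : ∀ b, μ ^ 2 * (b ⬝ᵥ b) ≤ (Wᵀ * V) *ᵥ b ⬝ᵥ (Wᵀ * V) *ᵥ b) (b : n → ℝ) :
    (1 - W * Wᵀ) *ᵥ (V *ᵥ b) ⬝ᵥ (1 - W * Wᵀ) *ᵥ (V *ᵥ b) ≤ (1 - μ ^ 2) * (b ⬝ᵥ b) := by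
  rw [one_sub_mul_transpose_mulVec_dotProduct_self hW,
    mulVec_dotProduct_mulVec_self_of_isometry hV, mulVec_mulVec]
  linarith [hμ b]

omit [Fintype n] [DecidableEq n] in
lemma sub_mulVec_dotProduct_self_eq_add {P Q : Matrix m m ℝ} (hP : Pᵀ = P) (hQ : Qᵀ = Q)
    (hQ2 : IsIdempotentElem Q) (v : m → ℝ) :
    (P - Q) *ᵥ v ⬝ᵥ (P - Q) *ᵥ v =
      (1 - Q) *ᵥ (P *ᵥ v) ⬝ᵥ (1 - Q) *ᵥ (P *ᵥ v) +
        Q *ᵥ ((1 - P) *ᵥ v) ⬝ᵥ Q *ᵥ ((1 - P) *ᵥ v) := by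
  have key : (P - Q)ᵀ * (P - Q) =
      ((1 - Q) * P)ᵀ * ((1 - Q) * P) + (Q * (1 - P))ᵀ * (Q * (1 - P)) := by
    simp only [transpose_sub, transpose_mul, transpose_one, hP, hQ]
    rw [← sub_eq_zero]
    have : (P - Q) * (P - Q) - (P * (1 - Q) * ((1 - Q) * P) + (1 - P) * Q * (Q * (1 - P))) =
        P * (Q * Q - Q) + (Q * Q - Q) * P - 2 • (P * (Q * Q - Q) * P) := by
      noncomm_ring
    rw [this, hQ2.eq]
    simp
  rw [mulVec_dotProduct_mulVec_self, key, add_mulVec, dotProduct_add, mulVec_mulVec,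
    mulVec_mulVec, ← mulVec_dotProduct_mulVec_self, ← mulVec_dotProduct_mulVec_self]

end Projection

section Procrustes

variable {d k : ℕ} {U C : Matrix (Fin d) (Fin k) ℝ}

lemma frobNorm_sq (X : Matrix (Fin d) (Fin k) ℝ) : frobNorm X ^ 2 = trace (Xᵀ * X) := by
  rw [frobNorm, Real.sq_sqrt (by positivity), Finset.sum_comm]
  simp [trace, mul_apply, sq]

lemma frobNorm_sub_mul_sq (hC : Cᵀ * C = 1) {O : Matrix (Fin k) (Fin k) ℝ} (hO : Oᵀ * O = 1) :
    frobNorm (U - C * O) ^ 2 = trace (Uᵀ * U) + k - 2 * trace (Oᵀ * (Cᵀ * U)) := by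
  have hCO : Oᵀ * Cᵀ * (C * O) = 1 := by
    rw [Matrix.mul_assoc, ← Matrix.mul_assoc Cᵀ, hC, Matrix.one_mul, hO]
  have hUCO : trace (Uᵀ * (C * O)) = trace (Oᵀ * (Cᵀ * U)) := by
    rw [← trace_transpose]
    simp [transpose_mul, Matrix.mul_assoc]
  rw [frobNorm_sq, transpose_sub, transpose_mul, Matrix.sub_mul, Matrix.mul_sub, Matrix.mul_sub,
    hCO, trace_sub, trace_sub, trace_sub, hUCO, trace_one, Fintype.card_fin, Matrix.mul_assoc Oᵀ]
  ring

lemma traceMaximal_of_frobNorm_le (hC : Cᵀ * C = 1)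
    (hmin : ∀ O : Matrix (Fin k) (Fin k) ℝ, Oᵀ * O = 1 → frobNorm (U - C) ≤ frobNorm (U - C * O)) :
    TraceMaximal (Cᵀ * U) := by
  intro O hO
  have h := pow_le_pow_left₀ (Real.sqrt_nonneg _) (hmin O hO) 2
  have h1 := frobNorm_sub_mul_sq (U := U) hC (O := 1) (by simp)
  rw [Matrix.mul_one, transpose_one, Matrix.one_mul] at h1
  rw [← frobNorm, h1, frobNorm_sub_mul_sq hC hO] at h
  linarith

lemma sub_mulVec_dotProduct_self (hU : Uᵀ * U = 1) (hC : Cᵀ * C = 1) (v : Fin k → ℝ) :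
    (U - C) *ᵥ v ⬝ᵥ (U - C) *ᵥ v = 2 * (v ⬝ᵥ v) - 2 * (v ⬝ᵥ (Cᵀ * U) *ᵥ v) := by
  have hUC : v ⬝ᵥ (Uᵀ * C) *ᵥ v = v ⬝ᵥ (Cᵀ * U) *ᵥ v := by
    rw [← mulVec_mulVec, ← mulVec_dotProduct, dotProduct_comm, mulVec_dotProduct, mulVec_mulVec]
  rw [mulVec_dotProduct_mulVec_self, transpose_sub, Matrix.sub_mul, Matrix.mul_sub,
    Matrix.mul_sub, hU, hC]
  simp only [sub_mulVec, one_mulVec, dotProduct_sub, hUC]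
  ring

lemma mul_transpose_sub_mulVec_dotProduct_self (hC : Cᵀ * C = 1) (v : Fin d → ℝ) :
    (U * Uᵀ - C * Cᵀ) *ᵥ v ⬝ᵥ (U * Uᵀ - C * Cᵀ) *ᵥ v =
      (1 - C * Cᵀ) *ᵥ (U *ᵥ (Uᵀ *ᵥ v)) ⬝ᵥ (1 - C * Cᵀ) *ᵥ (U *ᵥ (Uᵀ *ᵥ v)) +
        Cᵀ *ᵥ ((1 - U * Uᵀ) *ᵥ v) ⬝ᵥ Cᵀ *ᵥ ((1 - U * Uᵀ) *ᵥ v) := by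
  rw [sub_mulVec_dotProduct_self_eq_add (by simp) (by simp) (isIdempotentElem_mul_transpose hC),
    ← mulVec_mulVec _ U, ← mulVec_mulVec _ C, mulVec_dotProduct_mulVec_self_of_isometry hC]

lemma specNorm_mul_transpose_sub_sq_le (hU : Uᵀ * U = 1) (hC : Cᵀ * C = 1)
    (hN : (Cᵀ * U)ᵀ = Cᵀ * U) {μ : ℝ} (hμ1 : μ ^ 2 ≤ 1)
    (hμ : ∀ b, μ ^ 2 * (b ⬝ᵥ b) ≤ (Cᵀ * U) *ᵥ b ⬝ᵥ (Cᵀ * U) *ᵥ b) :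
    specNorm (U * Uᵀ - C * Cᵀ) ^ 2 ≤ 1 - μ ^ 2 := by
  have hUC : Uᵀ * C = Cᵀ * U := by rw [← hN, transpose_mul, transpose_transpose]
  have hsin : specNorm ((1 - U * Uᵀ) * C) ^ 2 ≤ 1 - μ ^ 2 :=
    specNorm_sq_le (by linarith) fun b => by
      rw [← mulVec_mulVec]
      exact one_sub_mul_transpose_mulVec_mulVec_dotProduct_self_le hC hU (by rwa [hUC]) b
  refine specNorm_sq_le (by linarith) fun v => ?_
  set w := (1 - U * Uᵀ) *ᵥ v
  have hw : Cᵀ *ᵥ w = ((1 - U * Uᵀ) * C)ᵀ *ᵥ w := by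
    rw [transpose_mul, transpose_one_sub_mul_transpose, ← mulVec_mulVec]
    simp only [w, mulVec_mulVec, (isIdempotentElem_mul_transpose hU).one_sub.eq]
  have hrange := one_sub_mul_transpose_mulVec_mulVec_dotProduct_self_le hU hC hμ (Uᵀ *ᵥ v)
  have hkernel : Cᵀ *ᵥ w ⬝ᵥ Cᵀ *ᵥ w ≤ (1 - μ ^ 2) * (w ⬝ᵥ w) := by
    rw [hw]
    calc _ ≤ specNorm ((1 - U * Uᵀ) * C)ᵀ ^ 2 * (w ⬝ᵥ w) := mulVec_dotProduct_mulVec_self_le _ _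
      _ ≤ _ := by
        rw [specNorm_transpose]
        exact mul_le_mul_of_nonneg_right hsin (dotProduct_self_nonneg w)
  have hsplit := one_sub_mul_transpose_mulVec_dotProduct_self hU v
  rw [mul_transpose_sub_mulVec_dotProduct_self hC]
  linear_combination hrange + hkernel + (1 - μ ^ 2) * hsplit

lemma mul_transpose_sub_mulVec_mulVec_dotProduct_self (hU : Uᵀ * U = 1) (hC : Cᵀ * C = 1)
    {x : Fin k → ℝ} (hx : x ⬝ᵥ x = 1) {μ : ℝ} (hNx : (Cᵀ * U) *ᵥ x = μ • x) :
    (U * Uᵀ - C * Cᵀ) *ᵥ (U *ᵥ x) ⬝ᵥ (U * Uᵀ - C * Cᵀ) *ᵥ (U *ᵥ x) = 1 - μ ^ 2 := by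
  have hUx : Uᵀ *ᵥ (U *ᵥ x) = x := by rw [mulVec_mulVec, hU, one_mulVec]
  have hcompl : (1 - U * Uᵀ) *ᵥ (U *ᵥ x) = 0 := by
    rw [sub_mulVec, one_mulVec, ← mulVec_mulVec, hUx, sub_self]
  rw [mul_transpose_sub_mulVec_dotProduct_self hC, hUx, hcompl, mulVec_zero, dotProduct_zero,
    add_zero, one_sub_mul_transpose_mulVec_dotProduct_self hC,
    mulVec_dotProduct_mulVec_self_of_isometry hU, mulVec_mulVec, hNx, dotProduct_smul,
    smul_dotProduct, hx, smul_eq_mul, smul_eq_mul]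
  ring

theorem exists_specNorm_sq_eq [NeZero k] (hU : Uᵀ * U = 1) (hC : Cᵀ * C = 1)
    (hN : TraceMaximal (Cᵀ * U)) :
    ∃ μ, 0 ≤ μ ∧ specNorm (U - C) ^ 2 = 2 - 2 * μ ∧
      specNorm (U * Uᵀ - C * Cᵀ) ^ 2 = 1 - μ ^ 2 := by
  obtain ⟨x, hx, hxs⟩ := exists_mulVec_dotProduct_mulVec_self_eq (U - C)
  set μ := x ⬝ᵥ (Cᵀ * U) *ᵥ x
  have hsub : specNorm (U - C) ^ 2 = 2 - 2 * μ := by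
    rw [← hxs, sub_mulVec_dotProduct_self hU hC, hx]
    ring
  have hμ (v : Fin k → ℝ) : μ * (v ⬝ᵥ v) ≤ v ⬝ᵥ (Cᵀ * U) *ᵥ v := by
    have := mulVec_dotProduct_mulVec_self_le (U - C) v
    rw [sub_mulVec_dotProduct_self hU hC, hsub] at this
    linarith
  have hμ0 : 0 ≤ μ := hN.dotProduct_mulVec_nonneg x
  have hNx := mulVec_eq_smul_of_dotProduct_mulVec_eq hN.transpose_eq hμ (by rw [hx, mul_one])
  have hlow := mul_transpose_sub_mulVec_mulVec_dotProduct_self hU hC hx hNx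
  have hμ1 : μ ^ 2 ≤ 1 := by
    linarith [dotProduct_self_nonneg ((U * Uᵀ - C * Cᵀ) *ᵥ (U *ᵥ x))]
  refine ⟨μ, hμ0, hsub, le_antisymm (specNorm_mul_transpose_sub_sq_le hU hC hN.transpose_eq hμ1
    (sq_mul_le_mulVec_dotProduct_mulVec_self hμ0 hμ)) ?_⟩
  have := mulVec_dotProduct_mulVec_self_le (U * Uᵀ - C * Cᵀ) (U *ᵥ x)
  rwa [hlow, mulVec_dotProduct_mulVec_self_of_isometry hU, hx, mul_one] at this

end Procrustes

/-- Let `U, Ũ ∈ ℝ^{d×k}` have orthonormal columns and let `O*` minimize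
`‖U − Ũ O‖_F` over orthogonal `O`.  With `d(U,Ũ) = ‖U − Ũ O*‖₂` and
`dist(U,Ũ) = ‖U Uᵀ − Ũ Ũᵀ‖₂`, one has `d(U,Ũ) = √(2 − 2 √(1 − dist(U,Ũ)²))`. -/
theorem procrustes_distance_formula {d k : ℕ}
    (U Ut : Matrix (Fin d) (Fin k) ℝ)
    (hU : Uᵀ * U = 1) (hUt : Utᵀ * Ut = 1)
    (Ostar : Matrix (Fin k) (Fin k) ℝ) (hOstar : Ostarᵀ * Ostar = 1)
    (hmin : ∀ O : Matrix (Fin k) (Fin k) ℝ, Oᵀ * O = 1 →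
      frobNorm (U - Ut * Ostar) ≤ frobNorm (U - Ut * O)) :
    specNorm (U - Ut * Ostar) =
      Real.sqrt (2 - 2 * Real.sqrt (1 - (specNorm (U * Uᵀ - Ut * Utᵀ)) ^ 2)) := by
  set C := Ut * Ostar
  have hC : Cᵀ * C = 1 := by
    rw [transpose_mul, Matrix.mul_assoc, ← Matrix.mul_assoc Utᵀ, hUt, Matrix.one_mul, hOstar]
  have hCC : Ut * Utᵀ = C * Cᵀ := by
    rw [transpose_mul, Matrix.mul_assoc, ← Matrix.mul_assoc Ostar, mul_eq_one_comm.mp hOstar,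
      Matrix.one_mul]
  have hN : TraceMaximal (Cᵀ * U) := traceMaximal_of_frobNorm_le hC fun O hO => by
    simpa [C, Matrix.mul_assoc] using hmin (Ostar * O) (by
      rw [transpose_mul, Matrix.mul_assoc, ← Matrix.mul_assoc Ostarᵀ, hOstar, Matrix.one_mul, hO])
  rw [hCC]
  rcases k.eq_zero_or_pos with rfl | hk
  · rw [Subsingleton.elim (U - C) 0, show U * Uᵀ - C * Cᵀ = 0 by ext; simp, specNorm_zero,
      specNorm_zero]
    norm_num
  have : NeZero k := ⟨hk.ne'⟩
  obtain ⟨μ, hμ0, hsub, hproj⟩ := exists_specNorm_sq_eq hU hC hN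
  rw [hproj, sub_sub_cancel, Real.sqrt_sq hμ0, ← hsub, Real.sqrt_sq (specNorm_nonneg _)]
end

section
/- (Davis–Kahan sin θ bound) Let M and M̃ be symmetric d×d real matrices with top-k eigenspaces spanned by orthonormal U_k and Ũ_k respectively. Let δ_k = min{|σ_k(M) − σ_j(M̃)| : j ≥ k+1}, where σ_j denotes the j-th largest eigenvalue. If δ_k > 0, then ‖U_kU_kᵀ − Ũ_kŨ_kᵀ‖₂ ≤ ‖M − M̃‖₂ / δ_k. -/
open Matrix Finset

/-!
Write `P = U Uᵀ` and `Q = Ũ Ũᵀ` for the two top-`k` spectral projections and let the columns of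
`W` span the complement of `Ũ`. For star projections, `‖P - Q‖ ≤ max ‖(1 - Q) P‖ ‖(1 - P) Q‖`,
and for projections of equal rank the two norms agree, because with `C = Uᵀ Ũ` their squares are
`‖1 - C Cᵀ‖` and `‖1 - Cᵀ C‖`, and `C Cᵀ`, `Cᵀ C` have the same spectrum. Hence
`‖P - Q‖ ≤ ‖(1 - Q) P‖ = ‖Wᵀ U‖`.

If every trailing eigenvalue `σ_j(M̃)` lies below `σ_k(M)`, it lies below `σ_k(M) - δ`, while the
top `k` eigenvalues of `M` lie above `σ_k(M)`. The matrix `S = Wᵀ U` solves the Sylvester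
equation `S Λ - Λ̃ S = Wᵀ (M - M̃) U`, and testing it against the top singular pair of `S` gives
`δ ‖S‖ ≤ ‖M - M̃‖`. Otherwise some trailing `σ_j(M̃)` exceeds `σ_k(M)`, so
`δ ≤ σ_{k+1}(M̃) - σ_{k+1}(M) ≤ ‖M - M̃‖` by Weyl's inequality, while `‖S‖ ≤ 1`.
-/

open scoped Matrix.Norms.L2Operator

namespace Matrix

variable {m n p : Type*}

lemma transpose_eq_of_isSelfAdjoint {A : Matrix n n ℝ} (hA : IsSelfAdjoint A) : Aᵀ = A := by
  rw [← conjTranspose_eq_transpose_of_trivial, ← star_eq_conjTranspose, hA.star_eq]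

lemma isSelfAdjoint_transpose_mul_self [Fintype m] (A : Matrix m n ℝ) :
    IsSelfAdjoint (Aᵀ * A) := by
  simpa [conjTranspose_eq_transpose_of_trivial] using
    isHermitian_iff_isSelfAdjoint.mp (isHermitian_conjTranspose_mul_self A)

section Columns

variable {R ι κ : Type*} [CommSemiring R]

lemma transpose_submatrix_mul_submatrix [Fintype m] (X : Matrix m n R) (f : ι → n) (g : κ → n) :
    (X.submatrix id f)ᵀ * X.submatrix id g = (Xᵀ * X).submatrix f g := by
  rw [transpose_submatrix, submatrix_mul _ _ _ _ _ Function.bijective_id]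

lemma transpose_submatrix_mul_submatrix_self [Fintype m] [DecidableEq n] [DecidableEq ι]
    {X : Matrix m n R} (hX : Xᵀ * X = 1) {f : ι → n} (hf : Function.Injective f) :
    (X.submatrix id f)ᵀ * X.submatrix id f = 1 := by
  rw [transpose_submatrix_mul_submatrix, hX, submatrix_one _ hf]

lemma submatrix_mul_transpose_add_submatrix_mul_transpose [Fintype n] [Fintype ι] [Fintype κ]
    (X : Matrix m n R) {f : ι → n} {g : κ → n} (h : Function.Bijective (Sum.elim f g)) :
    X.submatrix id f * (X.submatrix id f)ᵀ + X.submatrix id g * (X.submatrix id g)ᵀ = X * Xᵀ := by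
  ext i j
  simp only [add_apply, mul_apply, transpose_apply, submatrix_apply, id]
  rw [← h.sum_comp, Fintype.sum_sum_type]
  rfl

variable [Fintype n] [DecidableEq n] [Fintype ι] [DecidableEq ι] {X : Matrix n n R}

lemma mul_diagonal_mul_transpose_mul_submatrix (hX : Xᵀ * X = 1) (w : n → R) (f : ι → n) :
    X * diagonal w * Xᵀ * X.submatrix id f = X.submatrix id f * diagonal (w ∘ f) := by
  rw [← submatrix_id_id (X * diagonal w * Xᵀ), ← submatrix_mul _ _ _ _ _ Function.bijective_id,
    Matrix.mul_assoc, hX, Matrix.mul_one]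
  ext i j
  simp [mul_diagonal]

lemma transpose_submatrix_mul_mul_diagonal_mul_transpose (hX : Xᵀ * X = 1) (w : n → R)
    (f : ι → n) :
    (X.submatrix id f)ᵀ * (X * diagonal w * Xᵀ) = diagonal (w ∘ f) * (X.submatrix id f)ᵀ := by
  simpa [transpose_mul, Matrix.mul_assoc] using
    congrArg transpose (mul_diagonal_mul_transpose_mul_submatrix hX w f)

end Columns

variable [Fintype m] [Fintype n] [Fintype p]

section DotProduct

lemma dotProduct_self_eq_norm_sq (x : n → ℝ) :
    x ⬝ᵥ x = ‖(EuclideanSpace.equiv n ℝ).symm x‖ ^ 2 := by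
  rw [EuclideanSpace.norm_sq_eq]
  simp [dotProduct, sq]

lemma dotProduct_self_nonneg (x : n → ℝ) : 0 ≤ x ⬝ᵥ x := by
  rw [dotProduct_self_eq_norm_sq]
  positivity

lemma dotProduct_self_pos {x : n → ℝ} (hx : x ≠ 0) : 0 < x ⬝ᵥ x :=
  (dotProduct_self_nonneg x).lt_of_ne' fun h => hx (dotProduct_self_eq_zero.mp h)

lemma mulVec_dotProduct_mulVec (A B : Matrix m n ℝ) (x y : n → ℝ) :
    (A *ᵥ x) ⬝ᵥ (B *ᵥ y) = x ⬝ᵥ ((Aᵀ * B) *ᵥ y) := by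
  rw [dotProduct_comm, dotProduct_mulVec, ← mulVec_transpose, mulVec_mulVec, dotProduct_comm]

lemma mul_dotProduct_le_dotProduct_diagonal_mulVec [DecidableEq n] {w : n → ℝ} {t : ℝ}
    (h : ∀ i, t ≤ w i) (x : n → ℝ) : t * (x ⬝ᵥ x) ≤ x ⬝ᵥ (diagonal w *ᵥ x) := by
  simp only [dotProduct, mulVec_diagonal, Finset.mul_sum]
  exact Finset.sum_le_sum fun i _ => by nlinarith [h i, mul_self_nonneg (x i)]

lemma dotProduct_diagonal_mulVec_le [DecidableEq n] {w : n → ℝ} {t : ℝ} {x : n → ℝ}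
    (h : ∀ i, x i ≠ 0 → w i ≤ t) : x ⬝ᵥ (diagonal w *ᵥ x) ≤ t * (x ⬝ᵥ x) := by
  simp only [dotProduct, mulVec_diagonal, Finset.mul_sum]
  refine Finset.sum_le_sum fun i _ => ?_
  by_cases hx : x i = 0
  · simp [hx]
  · nlinarith [h i hx, mul_self_nonneg (x i)]

end DotProduct

section L2OpNorm

lemma mulVec_dotProduct_mulVec_le [DecidableEq n] (A : Matrix m n ℝ) (x : n → ℝ) :
    (A *ᵥ x) ⬝ᵥ (A *ᵥ x) ≤ ‖A‖ ^ 2 * (x ⬝ᵥ x) := by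
  rw [dotProduct_self_eq_norm_sq, dotProduct_self_eq_norm_sq, ← mul_pow]
  exact pow_le_pow_left₀ (norm_nonneg _) (A.l2_opNorm_mulVec _) 2

lemma l2_opNorm_le_of_mulVec_dotProduct_le [DecidableEq n] {A : Matrix m n ℝ} {c : ℝ} (hc : 0 ≤ c)
    (h : ∀ x, (A *ᵥ x) ⬝ᵥ (A *ᵥ x) ≤ c ^ 2 * (x ⬝ᵥ x)) : ‖A‖ ≤ c := by
  rw [l2_opNorm_def]
  refine ContinuousLinearMap.opNorm_le_bound _ hc fun x => ?_
  rw [← pow_le_pow_iff_left₀ (norm_nonneg _) (by positivity) two_ne_zero, mul_pow]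
  simpa [dotProduct_self_eq_norm_sq, toLpLin_apply] using h x

lemma sq_dotProduct_mulVec_le [DecidableEq n] (A : Matrix m n ℝ) (x : n → ℝ) (y : m → ℝ) :
    (y ⬝ᵥ (A *ᵥ x)) ^ 2 ≤ ‖A‖ ^ 2 * (x ⬝ᵥ x) * (y ⬝ᵥ y) := by
  have cauchy_schwarz : (y ⬝ᵥ (A *ᵥ x)) ^ 2 ≤ (y ⬝ᵥ y) * ((A *ᵥ x) ⬝ᵥ (A *ᵥ x)) := by
    simpa only [dotProduct, sq] using Finset.sum_mul_sq_le_sq_mul_sq Finset.univ y (A *ᵥ x)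
  nlinarith [mulVec_dotProduct_mulVec_le A x, dotProduct_self_nonneg y]

lemma dotProduct_mulVec_le [DecidableEq n] (A : Matrix n n ℝ) (x : n → ℝ) :
    x ⬝ᵥ (A *ᵥ x) ≤ ‖A‖ * (x ⬝ᵥ x) :=
  (abs_le_of_sq_le_sq' (by nlinarith [sq_dotProduct_mulVec_le A x x])
    (mul_nonneg (norm_nonneg A) (dotProduct_self_nonneg x))).2

lemma l2_opNorm_transpose [DecidableEq m] [DecidableEq n] (A : Matrix m n ℝ) : ‖Aᵀ‖ = ‖A‖ := by
  rw [← conjTranspose_eq_transpose_of_trivial, l2_opNorm_conjTranspose]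

lemma l2_opNorm_transpose_mul_self [DecidableEq n] (A : Matrix m n ℝ) : ‖Aᵀ * A‖ = ‖A‖ ^ 2 := by
  rw [← conjTranspose_eq_transpose_of_trivial, l2_opNorm_conjTranspose_mul_self, sq]

lemma l2_opNorm_le_one_of_transpose_mul_self [DecidableEq n] {U : Matrix m n ℝ}
    (hU : Uᵀ * U = 1) : ‖U‖ ≤ 1 := by
  rw [← pow_le_one_iff_of_nonneg (norm_nonneg U) two_ne_zero, ← l2_opNorm_transpose_mul_self, hU]
  exact (IsStarProjection.one _).norm_le

variable [DecidableEq m] [DecidableEq n]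

lemma l2_opNorm_mul_mul_transpose {U : Matrix m n ℝ} (hU : Uᵀ * U = 1) (Y : Matrix n n ℝ) :
    ‖U * Y * Uᵀ‖ = ‖Y‖ := by
  have hU₁ := l2_opNorm_le_one_of_transpose_mul_self hU
  have hUt₁ : ‖Uᵀ‖ ≤ 1 := (l2_opNorm_transpose U).trans_le hU₁
  refine le_antisymm ?_ ?_
  · calc ‖U * Y * Uᵀ‖ ≤ ‖U‖ * ‖Y‖ * ‖Uᵀ‖ :=
          (l2_opNorm_mul _ _).trans (mul_le_mul_of_nonneg_right (l2_opNorm_mul _ _) (norm_nonneg _))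
      _ ≤ 1 * ‖Y‖ * 1 := by gcongr
      _ = ‖Y‖ := by ring
  · calc ‖Y‖ = ‖Uᵀ * (U * Y * Uᵀ) * U‖ := by
          simp only [← Matrix.mul_assoc, hU, Matrix.one_mul]
          rw [Matrix.mul_assoc, hU, Matrix.mul_one]
      _ ≤ ‖Uᵀ‖ * ‖U * Y * Uᵀ‖ * ‖U‖ :=
          (l2_opNorm_mul _ _).trans (mul_le_mul_of_nonneg_right (l2_opNorm_mul _ _) (norm_nonneg _))
      _ ≤ 1 * ‖U * Y * Uᵀ‖ * 1 := by gcongr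
      _ = ‖U * Y * Uᵀ‖ := by ring

lemma l2_opNorm_transpose_mul_mul_le [DecidableEq p] {U : Matrix m n ℝ} {W : Matrix m p ℝ}
    (hW : Wᵀ * W = 1) (hU : Uᵀ * U = 1) (A : Matrix m m ℝ) : ‖Wᵀ * A * U‖ ≤ ‖A‖ :=
  calc ‖Wᵀ * A * U‖ ≤ ‖Wᵀ‖ * ‖A‖ * ‖U‖ :=
        (l2_opNorm_mul _ _).trans (mul_le_mul_of_nonneg_right (l2_opNorm_mul _ _) (norm_nonneg _))
    _ ≤ 1 * ‖A‖ * 1 := by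
        gcongr
        · exact (l2_opNorm_transpose W).trans_le (l2_opNorm_le_one_of_transpose_mul_self hW)
        · exact l2_opNorm_le_one_of_transpose_mul_self hU
    _ = ‖A‖ := by ring

end L2OpNorm

section Spectrum

lemma exists_mulVec_eq_zero_of_card_lt {K : Type*} [Field K] (A : Matrix m n K)
    (h : Fintype.card m < Fintype.card n) : ∃ v ≠ 0, A *ᵥ v = 0 := by
  obtain ⟨v, hv, hv0⟩ := Submodule.exists_mem_ne_zero_of_ne_bot
    (LinearMap.ker_ne_bot_of_finrank_lt (f := A.mulVecLin) (by simpa using h))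
  exact ⟨v, hv0, hv⟩

variable [DecidableEq n]

lemma spectrum_mul_comm {K : Type*} [Field K] (A B : Matrix n n K) :
    spectrum K (A * B) = spectrum K (B * A) := by
  ext r
  simp only [mem_spectrum_iff_isRoot_charpoly, charpoly_mul_comm]

lemma l2_opNorm_eq_of_spectrum_eq {A B : Matrix n n ℝ} (hA : IsSelfAdjoint A)
    (hB : IsSelfAdjoint B) (h : spectrum ℝ A = spectrum ℝ B) : ‖A‖ = ‖B‖ := by
  rcases isEmpty_or_nonempty n with hn | hn
  · rw [Subsingleton.elim A B]
  · refine (IsometricContinuousFunctionalCalculus.isGreatest_norm_spectrum (𝕜 := ℝ) A hA).unique ?_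
    rw [h]
    exact IsometricContinuousFunctionalCalculus.isGreatest_norm_spectrum (𝕜 := ℝ) B hB

lemma l2_opNorm_one_sub_mul_transpose (C : Matrix n n ℝ) : ‖1 - C * Cᵀ‖ = ‖1 - Cᵀ * C‖ := by
  have hsa : ∀ A : Matrix n n ℝ, IsSelfAdjoint (1 - Aᵀ * A) := fun A =>
    (IsSelfAdjoint.one _).sub (isSelfAdjoint_transpose_mul_self A)
  refine l2_opNorm_eq_of_spectrum_eq (by simpa using hsa Cᵀ) (hsa C) ?_
  rw [← map_one (algebraMap ℝ (Matrix n n ℝ)), ← spectrum.singleton_sub_eq,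
    ← spectrum.singleton_sub_eq, spectrum_mul_comm]

lemma exists_mulVec_eq_smul_of_mem_spectrum {K : Type*} [Field K] {A : Matrix n n K} {r : K}
    (hr : r ∈ spectrum K A) : ∃ v ≠ 0, A *ᵥ v = r • v := by
  obtain ⟨v, hv⟩ := (Module.End.hasEigenvalue_iff_mem_spectrum (f := toLin' A).mpr
    (by rwa [spectrum_toLin'])).exists_hasEigenvector
  exact ⟨v, hv.2, by simpa using hv.apply_eq_smul⟩

lemma exists_transpose_mul_self_mulVec_eq [Nonempty n] (A : Matrix m n ℝ) :
    ∃ v ≠ 0, (Aᵀ * A) *ᵥ v = ‖A‖ ^ 2 • v := by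
  obtain ⟨r, hr, hr_norm⟩ := (IsometricContinuousFunctionalCalculus.isGreatest_norm_spectrum
    (𝕜 := ℝ) _ (isSelfAdjoint_transpose_mul_self A)).1
  obtain ⟨v, hv0, hv⟩ := exists_mulVec_eq_smul_of_mem_spectrum hr
  have hr0 : 0 ≤ r := by
    have h : r * (v ⬝ᵥ v) = (A *ᵥ v) ⬝ᵥ (A *ᵥ v) := by
      rw [mulVec_dotProduct_mulVec, hv, dotProduct_smul, smul_eq_mul]
    exact nonneg_of_mul_nonneg_left (h ▸ dotProduct_self_nonneg _) (dotProduct_self_pos hv0)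
  refine ⟨v, hv0, ?_⟩
  rw [hv, ← l2_opNorm_transpose_mul_self, ← hr_norm]
  simp [abs_of_nonneg hr0]

end Spectrum

theorem mul_l2_opNorm_le_l2_opNorm_mul_diagonal_sub_diagonal_mul [DecidableEq m] [DecidableEq n]
    (S : Matrix m n ℝ) {a : n → ℝ} {b : m → ℝ} {t δ : ℝ} (ha : ∀ i, t ≤ a i)
    (hb : ∀ j, b j ≤ t - δ) : δ * ‖S‖ ≤ ‖S * diagonal a - diagonal b * S‖ := by
  rcases isEmpty_or_nonempty n with hn | hn
  · simp [Subsingleton.elim S 0]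
  rcases le_or_gt δ 0 with hδ | hδ
  · exact (mul_nonpos_of_nonpos_of_nonneg hδ (norm_nonneg S)).trans (norm_nonneg _)
  -- `v` is a top right singular vector of `S`
  obtain ⟨v, hv0, hv⟩ := exists_transpose_mul_self_mulVec_eq S
  set R := S * diagonal a - diagonal b * S
  set u := S *ᵥ v
  have hvv := dotProduct_self_pos hv0
  have huu : u ⬝ᵥ u = ‖S‖ ^ 2 * (v ⬝ᵥ v) := by
    rw [mulVec_dotProduct_mulVec, hv, dotProduct_smul, smul_eq_mul]
  have hlower : δ * ‖S‖ ^ 2 * (v ⬝ᵥ v) ≤ u ⬝ᵥ (R *ᵥ v) := by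
    have hSa : u ⬝ᵥ ((S * diagonal a) *ᵥ v) = ‖S‖ ^ 2 * (v ⬝ᵥ (diagonal a *ᵥ v)) := by
      rw [← mulVec_mulVec, dotProduct_comm, mulVec_dotProduct_mulVec, hv, dotProduct_smul,
        smul_eq_mul, dotProduct_comm]
    have hbS : u ⬝ᵥ ((diagonal b * S) *ᵥ v) ≤ (t - δ) * (‖S‖ ^ 2 * (v ⬝ᵥ v)) := by
      rw [← mulVec_mulVec, ← huu]
      exact dotProduct_diagonal_mulVec_le fun j _ => hb j
    have hta := mul_le_mul_of_nonneg_left (mul_dotProduct_le_dotProduct_diagonal_mulVec ha v)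
      (sq_nonneg ‖S‖)
    rw [sub_mulVec, dotProduct_sub, hSa]
    linarith
  rcases (norm_nonneg S).eq_or_lt with hS | hS
  · rw [← hS, mul_zero]
    exact norm_nonneg _
  have hsq : (δ * ‖S‖) ^ 2 * (‖S‖ * (v ⬝ᵥ v)) ^ 2 ≤ ‖R‖ ^ 2 * (‖S‖ * (v ⬝ᵥ v)) ^ 2 :=
    calc _ = (δ * ‖S‖ ^ 2 * (v ⬝ᵥ v)) ^ 2 := by ring
      _ ≤ (u ⬝ᵥ (R *ᵥ v)) ^ 2 := pow_le_pow_left₀ (by positivity) hlower 2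
      _ ≤ ‖R‖ ^ 2 * (v ⬝ᵥ v) * (u ⬝ᵥ u) := sq_dotProduct_mulVec_le R v u
      _ = _ := by rw [huu]; ring
  exact (abs_le_of_sq_le_sq' (le_of_mul_le_mul_right hsq (by positivity)) (norm_nonneg _)).2

section StarProjection

lemma isStarProjection_mul_transpose [DecidableEq n] {U : Matrix m n ℝ} (hU : Uᵀ * U = 1) :
    IsStarProjection (U * Uᵀ) where
  isIdempotentElem := by
    rw [IsIdempotentElem, Matrix.mul_assoc, ← Matrix.mul_assoc Uᵀ, hU, Matrix.one_mul]
  isSelfAdjoint := by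
    rw [IsSelfAdjoint, star_eq_conjTranspose, conjTranspose_eq_transpose_of_trivial,
      transpose_mul, transpose_transpose]

lemma mulVec_dotProduct_mulVec_of_isStarProjection {P : Matrix n n ℝ} (hP : IsStarProjection P)
    (x y : n → ℝ) : (P *ᵥ x) ⬝ᵥ (P *ᵥ y) = x ⬝ᵥ (P *ᵥ y) := by
  rw [mulVec_dotProduct_mulVec, transpose_eq_of_isSelfAdjoint hP.isSelfAdjoint,
    hP.isIdempotentElem.eq]

lemma l2_opNorm_sub_le_of_isStarProjection [DecidableEq n] {P Q : Matrix n n ℝ}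
    (hP : IsStarProjection P) (hQ : IsStarProjection Q) {a : ℝ} (hPQ : ‖(1 - Q) * P‖ ≤ a)
    (hQP : ‖(1 - P) * Q‖ ≤ a) : ‖P - Q‖ ≤ a := by
  have hQP' : ‖Q * (1 - P)‖ ≤ a := by
    rwa [← l2_opNorm_transpose, transpose_mul, transpose_sub, transpose_one,
      transpose_eq_of_isSelfAdjoint hP.isSelfAdjoint,
      transpose_eq_of_isSelfAdjoint hQ.isSelfAdjoint]
  refine l2_opNorm_le_of_mulVec_dotProduct_le ((norm_nonneg _).trans hPQ) fun x => ?_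
  have hsplit : (P - Q) *ᵥ x = ((1 - Q) * P) *ᵥ (P *ᵥ x) - (Q * (1 - P)) *ᵥ ((1 - P) *ᵥ x) := by
    rw [mulVec_mulVec, mulVec_mulVec, ← sub_mulVec, Matrix.mul_assoc, hP.isIdempotentElem.eq,
      Matrix.mul_assoc, hP.one_sub.isIdempotentElem.eq]
    congr 1
    noncomm_ring
  -- the two pieces lie in the ranges of `1 - Q` and `Q`
  have horth : ((1 - Q) * P) *ᵥ (P *ᵥ x) ⬝ᵥ (Q * (1 - P)) *ᵥ ((1 - P) *ᵥ x) = 0 := by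
    simp only [← mulVec_mulVec]
    rw [mulVec_dotProduct_mulVec, transpose_sub, transpose_one,
      transpose_eq_of_isSelfAdjoint hQ.isSelfAdjoint, hQ.one_sub_mul_self, zero_mulVec,
      dotProduct_zero]
  have hpyth : (P *ᵥ x) ⬝ᵥ (P *ᵥ x) + ((1 - P) *ᵥ x) ⬝ᵥ ((1 - P) *ᵥ x) = x ⬝ᵥ x := by
    rw [mulVec_dotProduct_mulVec_of_isStarProjection hP,
      mulVec_dotProduct_mulVec_of_isStarProjection hP.one_sub, ← dotProduct_add, ← add_mulVec,
      add_sub_cancel, one_mulVec]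
  have h₁ := (mulVec_dotProduct_mulVec_le ((1 - Q) * P) (P *ᵥ x)).trans <|
    mul_le_mul_of_nonneg_right (pow_le_pow_left₀ (norm_nonneg _) hPQ 2) (dotProduct_self_nonneg _)
  have h₂ := (mulVec_dotProduct_mulVec_le (Q * (1 - P)) ((1 - P) *ᵥ x)).trans <|
    mul_le_mul_of_nonneg_right (pow_le_pow_left₀ (norm_nonneg _) hQP' 2) (dotProduct_self_nonneg _)
  rw [hsplit, sub_dotProduct, dotProduct_sub, dotProduct_sub]
  linear_combination h₁ + h₂ + a ^ 2 * hpyth - horth - (dotProduct_comm _ _).trans horth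

variable [DecidableEq m] [DecidableEq n]

lemma sq_l2_opNorm_mul_mul_transpose {Q : Matrix m m ℝ} (hQ : IsStarProjection Q)
    {U : Matrix m n ℝ} (hU : Uᵀ * U = 1) : ‖Q * (U * Uᵀ)‖ ^ 2 = ‖Uᵀ * Q * U‖ := by
  rw [← l2_opNorm_transpose_mul_self, transpose_mul,
    transpose_eq_of_isSelfAdjoint (isStarProjection_mul_transpose hU).isSelfAdjoint,
    transpose_eq_of_isSelfAdjoint hQ.isSelfAdjoint, ← l2_opNorm_mul_mul_transpose hU (Uᵀ * Q * U)]
  have hQQ : Q * Q = Q := hQ.isIdempotentElem.eq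
  simp only [Matrix.mul_assoc]
  rw [← Matrix.mul_assoc Q Q, hQQ]

lemma l2_opNorm_one_sub_mul_comm {U Ũ : Matrix m n ℝ} (hU : Uᵀ * U = 1) (hŨ : Ũᵀ * Ũ = 1) :
    ‖(1 - Ũ * Ũᵀ) * (U * Uᵀ)‖ = ‖(1 - U * Uᵀ) * (Ũ * Ũᵀ)‖ := by
  have hconj : ∀ {A B : Matrix m n ℝ}, Aᵀ * A = 1 →
      Aᵀ * (1 - B * Bᵀ) * A = 1 - (Aᵀ * B) * (Aᵀ * B)ᵀ := fun hA => by
    rw [Matrix.mul_sub, Matrix.sub_mul, Matrix.mul_one, hA, transpose_mul, transpose_transpose]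
    simp only [Matrix.mul_assoc]
  rw [← sq_eq_sq₀ (norm_nonneg _) (norm_nonneg _),
    sq_l2_opNorm_mul_mul_transpose (isStarProjection_mul_transpose hŨ).one_sub hU,
    sq_l2_opNorm_mul_mul_transpose (isStarProjection_mul_transpose hU).one_sub hŨ, hconj hU,
    hconj hŨ, show Ũᵀ * U = (Uᵀ * Ũ)ᵀ by rw [transpose_mul, transpose_transpose],
    transpose_transpose]
  exact l2_opNorm_one_sub_mul_transpose _

theorem l2_opNorm_mul_transpose_sub_le [DecidableEq p] {U Ũ : Matrix m n ℝ} {W : Matrix m p ℝ}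
    (hU : Uᵀ * U = 1) (hŨ : Ũᵀ * Ũ = 1) (hW : Ũ * Ũᵀ + W * Wᵀ = 1) :
    ‖U * Uᵀ - Ũ * Ũᵀ‖ ≤ ‖Wᵀ * U‖ := by
  have hQ := isStarProjection_mul_transpose hŨ
  have key : ‖(1 - Ũ * Ũᵀ) * (U * Uᵀ)‖ = ‖Wᵀ * U‖ := by
    rw [← sq_eq_sq₀ (norm_nonneg _) (norm_nonneg _), sq_l2_opNorm_mul_mul_transpose hQ.one_sub hU,
      ← l2_opNorm_transpose_mul_self, ← eq_sub_of_add_eq' hW, transpose_mul, transpose_transpose]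
    simp only [Matrix.mul_assoc]
  exact l2_opNorm_sub_le_of_isStarProjection (isStarProjection_mul_transpose hU) hQ key.le
    ((l2_opNorm_one_sub_mul_comm hU hŨ).symm.trans key).le

theorem mul_l2_opNorm_transpose_mul_le_l2_opNorm_sub [DecidableEq p] {M Mt : Matrix m m ℝ}
    {U : Matrix m n ℝ} {W : Matrix m p ℝ} (hU : Uᵀ * U = 1) (hW : Wᵀ * W = 1) {a : n → ℝ}
    {b : p → ℝ} (hMU : M * U = U * diagonal a) (hMtW : Wᵀ * Mt = diagonal b * Wᵀ) {t δ : ℝ}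
    (ha : ∀ i, t ≤ a i) (hb : ∀ j, b j ≤ t - δ) : δ * ‖Wᵀ * U‖ ≤ ‖M - Mt‖ :=
  calc δ * ‖Wᵀ * U‖ ≤ ‖Wᵀ * U * diagonal a - diagonal b * (Wᵀ * U)‖ :=
        mul_l2_opNorm_le_l2_opNorm_mul_diagonal_sub_diagonal_mul _ ha hb
    _ = ‖Wᵀ * (M - Mt) * U‖ := by
        rw [Matrix.mul_sub, Matrix.sub_mul, Matrix.mul_assoc Wᵀ M U, hMU, hMtW]
        simp only [Matrix.mul_assoc]
    _ ≤ ‖M - Mt‖ := l2_opNorm_transpose_mul_mul_le hW hU _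

end StarProjection

theorem sub_le_l2_opNorm_sub_of_antitone [LinearOrder m] {V Vt : Matrix m m ℝ} (hV : Vᵀ * V = 1)
    (hVt : Vtᵀ * Vt = 1) {μ ν : m → ℝ} (hμ : Antitone μ) (hν : Antitone ν) (i : m) :
    ν i - μ i ≤ ‖V * diagonal μ * Vᵀ - Vt * diagonal ν * Vtᵀ‖ := by
  set X := Vt.submatrix id (Subtype.val : {j // j ≤ i} → m)
  set Z := V.submatrix id (Subtype.val : {j // j < i} → m)
  have hcard : Fintype.card {j // j < i} < Fintype.card {j // j ≤ i} :=
    Fintype.card_lt_of_injective_of_notMem (fun j => ⟨j.1, j.2.le⟩)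
      (fun j j' h => Subtype.ext (congrArg Subtype.val h :)) (b := ⟨i, le_rfl⟩)
      (by rintro ⟨⟨j, hj⟩, h⟩; exact hj.ne (congrArg Subtype.val h))
  -- `x` lies in the span of the first `i + 1` columns of `Vt` and is orthogonal to the first `i`
  -- columns of `V`
  obtain ⟨c, hc0, hc⟩ := exists_mulVec_eq_zero_of_card_lt (Zᵀ * X) hcard
  have hX : Xᵀ * X = 1 := transpose_submatrix_mul_submatrix_self hVt Subtype.val_injective
  set x := X *ᵥ c
  have hxx : x ⬝ᵥ x = c ⬝ᵥ c := by rw [mulVec_dotProduct_mulVec, hX, one_mulVec]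
  have hMt : ν i * (x ⬝ᵥ x) ≤ x ⬝ᵥ ((Vt * diagonal ν * Vtᵀ) *ᵥ x) := by
    rw [hxx, mulVec_mulVec, mul_diagonal_mul_transpose_mul_submatrix hVt, mulVec_dotProduct_mulVec,
      ← Matrix.mul_assoc, hX, Matrix.one_mul]
    exact mul_dotProduct_le_dotProduct_diagonal_mulVec (fun j => hν j.2) c
  have hM : x ⬝ᵥ ((V * diagonal μ * Vᵀ) *ᵥ x) ≤ μ i * (x ⬝ᵥ x) := by
    have hVx : (Vᵀ *ᵥ x) ⬝ᵥ (Vᵀ *ᵥ x) = x ⬝ᵥ x := by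
      rw [mulVec_dotProduct_mulVec, transpose_transpose, mul_eq_one_comm.mp hV, one_mulVec]
    rw [← hVx, ← mulVec_mulVec, ← mulVec_mulVec, dotProduct_mulVec, ← mulVec_transpose]
    refine dotProduct_diagonal_mulVec_le fun j hj => hμ (not_lt.mp fun hji => hj ?_)
    change (Zᵀ *ᵥ (X *ᵥ c)) ⟨j, hji⟩ = 0
    rw [mulVec_mulVec, hc, Pi.zero_apply]
  have hE := dotProduct_mulVec_le (Vt * diagonal ν * Vtᵀ - V * diagonal μ * Vᵀ) x
  rw [sub_mulVec, dotProduct_sub, norm_sub_rev] at hE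
  exact le_of_mul_le_mul_right (by linarith) (hxx ▸ dotProduct_self_pos hc0)

end Matrix

lemma Fin.bijective_sumElim_castLE_subtypeVal {k d : ℕ} (h : k ≤ d) :
    Function.Bijective
      (Sum.elim (Fin.castLE h) (Subtype.val : {j : Fin d // k ≤ (j : ℕ)} → Fin d)) := by
  refine ⟨(Fin.castLE_injective h).sumElim Subtype.val_injective fun i j hij => ?_, fun j => ?_⟩
  · have := congrArg Fin.val hij
    simp only [Fin.val_castLE] at this
    omega
  · by_cases hj : k ≤ (j : ℕ)
    · exact ⟨.inr ⟨j, hj⟩, rfl⟩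
    · exact ⟨.inl ⟨j, by omega⟩, rfl⟩

/-- **Davis–Kahan `sin θ` theorem.** Let `M, M̃` be symmetric `d × d`
matrices, orthogonally diagonalized as `M = V diag(μ) Vᵀ` and `M̃ = Ṽ diag(ν) Ṽᵀ` with
eigenvalues `μ, ν` in decreasing order.  Let `U_k, Ũ_k` be the first `k` columns of
`V, Ṽ` (spanning the top-`k` eigenspaces), and let
`δ_k = inf { |σ_k(M) − σ_j(M̃)| : j ≥ k + 1 }` (1-indexed; `σ_k(M) = μ (k−1)` 0-indexed).
If `δ_k > 0`, then `‖U_k U_kᵀ − Ũ_k Ũ_kᵀ‖₂ ≤ ‖M − M̃‖₂ / δ_k`. -/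
theorem davis_kahan_sin_theta {d k : ℕ} (hk : 0 < k) (hkd : k ≤ d)
    (M Mt : Matrix (Fin d) (Fin d) ℝ)
    (μ ν : Fin d → ℝ) (hμ : Antitone μ) (hν : Antitone ν)
    (V Vt : Matrix (Fin d) (Fin d) ℝ)
    (hV : Vᵀ * V = 1) (hVt : Vtᵀ * Vt = 1)
    (hMdiag : M = V * Matrix.diagonal μ * Vᵀ)
    (hMtdiag : Mt = Vt * Matrix.diagonal ν * Vtᵀ)
    (Uk Utk : Matrix (Fin d) (Fin k) ℝ)
    (hUk : Uk = V.submatrix id (Fin.castLE hkd))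
    (hUtk : Utk = Vt.submatrix id (Fin.castLE hkd))
    (δ : ℝ)
    (hδ : δ = sInf {c : ℝ | ∃ j : Fin d, k ≤ (j : ℕ) ∧
      c = |μ ⟨k - 1, by omega⟩ - ν j|})
    (hδpos : 0 < δ) :
    specNorm (Uk * Ukᵀ - Utk * Utkᵀ) ≤ specNorm (M - Mt) / δ := by
  subst hUk hUtk hMdiag hMtdiag
  set κ : Fin d := ⟨k - 1, by omega⟩
  have hδle : ∀ j : Fin d, k ≤ (j : ℕ) → δ ≤ |μ κ - ν j| := fun j hj =>
    hδ ▸ csInf_le ⟨0, by rintro _ ⟨_, _, rfl⟩; exact abs_nonneg _⟩ ⟨j, hj, rfl⟩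
  set W := Vt.submatrix id (Subtype.val : {j : Fin d // k ≤ (j : ℕ)} → Fin d)
  have hUk := transpose_submatrix_mul_submatrix_self hV (Fin.castLE_injective hkd)
  have hUtk := transpose_submatrix_mul_submatrix_self hVt (Fin.castLE_injective hkd)
  have hW : Wᵀ * W = 1 := transpose_submatrix_mul_submatrix_self hVt Subtype.val_injective
  have hQW := (submatrix_mul_transpose_add_submatrix_mul_transpose Vt
    (Fin.bijective_sumElim_castLE_subtypeVal hkd)).trans (mul_eq_one_comm.mp hVt)
  rw [le_div_iff₀ hδpos, mul_comm]
  refine (mul_le_mul_of_nonneg_left (l2_opNorm_mul_transpose_sub_le hUk hUtk hQW) hδpos.le).trans ?_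
  by_cases hsep : ∀ j : {j : Fin d // k ≤ (j : ℕ)}, ν j ≤ μ κ
  · refine mul_l2_opNorm_transpose_mul_le_l2_opNorm_sub hUk hW
      (mul_diagonal_mul_transpose_mul_submatrix hV μ _)
      (transpose_submatrix_mul_mul_diagonal_mul_transpose hVt ν _) (t := μ κ)
      (fun i => hμ (Fin.le_def.2 (by simp only [Fin.val_castLE, κ]; omega))) fun j => ?_
    have hδj := hδle j j.2
    rw [abs_of_nonneg (sub_nonneg.2 (hsep j))] at hδj
    simp only [Function.comp_apply]
    linarith
  · push Not at hsep
    obtain ⟨⟨j, hkj⟩, hj⟩ := hsep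
    have hδj := hδle j hkj
    rw [abs_of_neg (sub_neg.2 hj)] at hδj
    have hμj : μ j ≤ μ κ := hμ (Fin.le_def.2 (by simp only [κ]; omega))
    calc δ * ‖Wᵀ * V.submatrix id (Fin.castLE hkd)‖ ≤ δ * 1 := by
          gcongr
          simpa using
            (l2_opNorm_transpose_mul_mul_le hW hUk 1).trans (IsStarProjection.one _).norm_le
      _ ≤ ν j - μ j := by linarith
      _ ≤ _ := sub_le_l2_opNorm_sub_of_antitone hV hVt hμ hν j
end

section
/- (Perturbation of projection distance) Let X, Y ∈ ℝ^{d×k} with rank(X) = rank(Y). Then dist(X,Y) ≤ min{‖X†‖₂, ‖Y†‖₂} · ‖X − Y‖₂, where dist(X,Y) is the spectral-norm distance between the orthogonal projectors onto the column spaces of X and Y, and X† denotes the Moore–Penrose pseudoinverse. -/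
set_option maxHeartbeats 1000000

open Matrix Finset

/-- `B` is the Moore–Penrose pseudoinverse of `X`. -/
def IsMoorePenrose {a b : ℕ} (X : Matrix (Fin a) (Fin b) ℝ)
    (B : Matrix (Fin b) (Fin a) ℝ) : Prop :=
  X * B * X = X ∧ B * X * B = B ∧ (X * B)ᵀ = X * B ∧ (B * X)ᵀ = B * X

namespace Proj9Aux

open RealInnerProductSpace

lemma le_of_sq_le_sq'' {x y : ℝ} (hx : 0 ≤ x) (hy : 0 ≤ y) (h : x ^ 2 ≤ y ^ 2) : x ≤ y :=
  (pow_le_pow_iff_left₀ hx hy (by norm_num)).mp h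

section Key
variable {V : Type*} [NormedAddCommGroup V] [InnerProductSpace ℝ V]

lemma inner_proj_self (Q : V →L[ℝ] V) (hQ2 : ∀ v, Q (Q v) = Q v)
    (hQs : ∀ u v, ⟪Q u, v⟫ = ⟪u, Q v⟫) (v : V) : ⟪v, Q v⟫ = ‖Q v‖ ^ 2 := by
  rw [← real_inner_self_eq_norm_sq]
  have h := hQs v (Q v)
  rw [hQ2] at h
  exact h.symm

/-- For a symmetric idempotent `Q`: `‖v - Q v‖² = ‖v‖² - ‖Q v‖²`. -/
lemma proj_pyth (Q : V →L[ℝ] V) (hQ2 : ∀ v, Q (Q v) = Q v)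
    (hQs : ∀ u v, ⟪Q u, v⟫ = ⟪u, Q v⟫) (v : V) :
    ‖v - Q v‖ ^ 2 = ‖v‖ ^ 2 - ‖Q v‖ ^ 2 := by
  have h1 := inner_proj_self Q hQ2 hQs v
  have := @norm_sub_sq_real V _ _ v (Q v)
  rw [this, h1]; ring

lemma proj_contract (Q : V →L[ℝ] V) (hQ2 : ∀ v, Q (Q v) = Q v)
    (hQs : ∀ u v, ⟪Q u, v⟫ = ⟪u, Q v⟫) (v : V) : ‖Q v‖ ≤ ‖v‖ := by
  have h := proj_pyth Q hQ2 hQs v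
  exact le_of_sq_le_sq'' (norm_nonneg _) (norm_nonneg _) (by nlinarith [sq_nonneg ‖v - Q v‖])

lemma proj_contract' (Q : V →L[ℝ] V) (hQ2 : ∀ v, Q (Q v) = Q v)
    (hQs : ∀ u v, ⟪Q u, v⟫ = ⟪u, Q v⟫) (v : V) : ‖v - Q v‖ ≤ ‖v‖ := by
  have h := proj_pyth Q hQ2 hQs v
  exact le_of_sq_le_sq'' (norm_nonneg _) (norm_nonneg _) (by nlinarith [sq_nonneg ‖Q v‖])

/-- Key abstract lemma: for symmetric idempotents `P`, `Q` of equal (finite) rank,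
if `‖(I - Q) P v‖ ≤ c ‖v‖` for all `v`, then `‖(P - Q) v‖ ≤ c ‖v‖` for all `v`. -/
lemma key_lemma [FiniteDimensional ℝ V] (P Q : V →L[ℝ] V)
    (hP2 : ∀ v, P (P v) = P v) (hQ2 : ∀ v, Q (Q v) = Q v)
    (hPs : ∀ u v, ⟪P u, v⟫ = ⟪u, P v⟫) (hQs : ∀ u v, ⟪Q u, v⟫ = ⟪u, Q v⟫)
    (hrank : Module.finrank ℝ (LinearMap.range (P : V →ₗ[ℝ] V)) =
             Module.finrank ℝ (LinearMap.range (Q : V →ₗ[ℝ] V)))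
    (c : ℝ) (hc : 0 ≤ c)
    (hA : ∀ v, ‖P v - Q (P v)‖ ≤ c * ‖v‖) (v : V) :
    ‖P v - Q v‖ ≤ c * ‖v‖ := by
  -- adjoint bound : ‖P (I - Q) v‖ ≤ c ‖v‖
  have hAT : ∀ u, ‖P u - P (Q u)‖ ≤ c * ‖u‖ := by
    intro u
    set w := P u - P (Q u) with hw
    have hiden : ‖w‖ ^ 2 = ⟪u, P w - Q (P w)⟫ := by
      rw [← real_inner_self_eq_norm_sq]
      calc ⟪w, w⟫ = ⟪P (u - Q u), w⟫ := by rw [map_sub]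
        _ = ⟪u - Q u, P w⟫ := hPs _ _
        _ = ⟪u, P w⟫ - ⟪Q u, P w⟫ := by rw [inner_sub_left]
        _ = ⟪u, P w⟫ - ⟪u, Q (P w)⟫ := by rw [hQs]
        _ = ⟪u, P w - Q (P w)⟫ := by rw [inner_sub_right]
    have hb : ‖w‖ ^ 2 ≤ ‖u‖ * (c * ‖w‖) := by
      rw [hiden]
      exact (real_inner_le_norm _ _).trans
        (mul_le_mul_of_nonneg_left (hA w) (norm_nonneg u))
    rcases eq_or_lt_of_le (norm_nonneg w) with h0 | h0
    · rw [← h0]; positivity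
    · nlinarith
  -- orthogonal decomposition: ‖P v - Q v‖² = ‖P (v - Q v)‖² + ‖Q v - P (Q v)‖²
  have hdec : ∀ u, ‖P u - Q u‖ ^ 2 = ‖P (u - Q u)‖ ^ 2 + ‖Q u - P (Q u)‖ ^ 2 := by
    intro u
    have hsplit : P u - Q u = P (u - Q u) - (Q u - P (Q u)) := by
      rw [map_sub]; abel
    have horth : ⟪P (u - Q u), Q u - P (Q u)⟫ = 0 := by
      rw [hPs]
      have : P (Q u - P (Q u)) = 0 := by rw [map_sub, hP2, sub_self]
      rw [this, inner_zero_right]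
    rw [hsplit]
    have := @norm_sub_sq_real V _ _ (P (u - Q u)) (Q u - P (Q u))
    rw [this, horth]; ring
  rcases le_or_gt 1 c with hc1 | hc1
  · -- trivial case: ‖P v - Q v‖ ≤ ‖v‖ ≤ c ‖v‖
    have h1 : ‖P (v - Q v)‖ ≤ ‖v - Q v‖ := proj_contract P hP2 hPs _
    have h2 : ‖Q v - P (Q v)‖ ≤ ‖Q v‖ := by
      have := proj_pyth P hP2 hPs (Q v)
      exact le_of_sq_le_sq'' (norm_nonneg _) (norm_nonneg _) (by nlinarith [sq_nonneg ‖P (Q v)‖])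
    have h3 := proj_pyth Q hQ2 hQs v
    have hle : ‖P v - Q v‖ ^ 2 ≤ ‖v‖ ^ 2 := by
      rw [hdec v]
      nlinarith [norm_nonneg (P (v - Q v)), norm_nonneg (Q v - P (Q v)),
        norm_nonneg (v - Q v), norm_nonneg (Q v)]
    have h4 : ‖P v - Q v‖ ≤ ‖v‖ := le_of_sq_le_sq'' (norm_nonneg _) (norm_nonneg _) hle
    calc ‖P v - Q v‖ ≤ ‖v‖ := h4
      _ = 1 * ‖v‖ := (one_mul _).symm
      _ ≤ c * ‖v‖ := mul_le_mul_of_nonneg_right hc1 (norm_nonneg v)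
  · -- main case c < 1
    have hc2 : (0:ℝ) < 1 - c ^ 2 := by nlinarith
    -- lower bound on Q over range P
    have hQP : ∀ u, (1 - c ^ 2) * ‖P u‖ ^ 2 ≤ ‖Q (P u)‖ ^ 2 := by
      intro u
      have hp := proj_pyth Q hQ2 hQs (P u)
      have ha := hA (P u)
      rw [hP2] at ha
      nlinarith [norm_nonneg (P u - Q (P u)), norm_nonneg (P u)]
    -- restriction of Q to range P, into range Q
    set P' := (P : V →ₗ[ℝ] V) with hP'
    set Q' := (Q : V →ₗ[ℝ] V) with hQ'
    have hQmem : ∀ x ∈ LinearMap.range P', Q' x ∈ LinearMap.range Q' :=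
      fun x _ => LinearMap.mem_range_self _ x
    set T := Q'.restrict hQmem with hT
    have hTapp : ∀ x : LinearMap.range P', (T x : V) = Q x := fun x => rfl
    have hfix : ∀ x : LinearMap.range P', P (x : V) = (x : V) := by
      rintro ⟨x, u, rfl⟩
      exact hP2 u
    have hTinj : Function.Injective T := by
      rw [← LinearMap.ker_eq_bot, LinearMap.ker_eq_bot']
      intro m hm
      have hQm : Q (m : V) = 0 := by
        have := congrArg (Subtype.val) hm
        rw [hTapp] at this
        exact this
      have hPm : P (m : V) = (m : V) := hfix m
      have h1 : (1 - c ^ 2) * ‖P (m : V)‖ ^ 2 ≤ ‖Q (P (m : V))‖ ^ 2 := hQP (m : V)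
      rw [hPm, hQm, norm_zero] at h1
      norm_num at h1
      have h2 : ‖(m : V)‖ ^ 2 ≤ 0 := by nlinarith [sq_nonneg ‖(m : V)‖]
      have h2' : ‖(m : V)‖ ^ 2 = 0 := le_antisymm h2 (sq_nonneg _)
      have h3 : (m : V) = 0 := by
        have := pow_eq_zero_iff (n := 2) (by norm_num) |>.mp h2'
        exact norm_eq_zero.mp this
      exact Subtype.ext h3
    have hTsurj : Function.Surjective T :=
      (LinearMap.injective_iff_surjective_of_finrank_eq_finrank hrank).mp hTinj
    -- lower bound on P over range Q
    have hPQ : ∀ w : V, w ∈ LinearMap.range Q' → (1 - c ^ 2) * ‖w‖ ^ 2 ≤ ‖P w‖ ^ 2 := by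
      intro w hw
      obtain ⟨x, hx⟩ := hTsurj ⟨w, hw⟩
      have hQx : Q (x : V) = w := by
        have := congrArg (Subtype.val) hx
        rw [hTapp] at this
        exact this
      have hPx : P (x : V) = (x : V) := hfix x
      by_cases hx0 : (x : V) = 0
      · have : w = 0 := by rw [← hQx, hx0, map_zero]
        simp [this]
      · have ht : (0:ℝ) < ‖(x : V)‖ := norm_pos_iff.mpr hx0
        have hip : ⟪P w, (x : V)⟫ = ‖w‖ ^ 2 := by
          calc ⟪P w, (x : V)⟫ = ⟪w, P (x : V)⟫ := hPs _ _
            _ = ⟪w, (x : V)⟫ := by rw [hPx]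
            _ = ⟪Q (x : V), (x : V)⟫ := by rw [hQx]
            _ = ⟪(x : V), Q (x : V)⟫ := real_inner_comm _ _
            _ = ‖Q (x : V)‖ ^ 2 := inner_proj_self Q hQ2 hQs _
            _ = ‖w‖ ^ 2 := by rw [hQx]
        have h1 : ‖w‖ ^ 2 ≤ ‖P w‖ * ‖(x : V)‖ := hip ▸ real_inner_le_norm (P w) (x : V)
        have h2 : (1 - c ^ 2) * ‖(x : V)‖ ^ 2 ≤ ‖w‖ ^ 2 := by
          have := hQP (x : V)
          rw [hPx, hQx] at this
          exact this
        have key : (1 - c ^ 2) * ‖w‖ ^ 2 * ‖(x : V)‖ ^ 2 ≤ ‖P w‖ ^ 2 * ‖(x : V)‖ ^ 2 := by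
          calc (1 - c ^ 2) * ‖w‖ ^ 2 * ‖(x : V)‖ ^ 2
              = ‖w‖ ^ 2 * ((1 - c ^ 2) * ‖(x : V)‖ ^ 2) := by ring
            _ ≤ ‖w‖ ^ 2 * ‖w‖ ^ 2 := mul_le_mul_of_nonneg_left h2 (sq_nonneg _)
            _ ≤ (‖P w‖ * ‖(x : V)‖) * (‖P w‖ * ‖(x : V)‖) :=
                mul_le_mul h1 h1 (sq_nonneg _) (by positivity)
            _ = ‖P w‖ ^ 2 * ‖(x : V)‖ ^ 2 := by ring
        exact le_of_mul_le_mul_right key (by positivity)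
    -- conclude
    have hQv := hPQ (Q v) (LinearMap.mem_range_self _ v)
    have e1 : ‖Q v - P (Q v)‖ ^ 2 ≤ c ^ 2 * ‖Q v‖ ^ 2 := by
      have := proj_pyth P hP2 hPs (Q v)
      nlinarith
    have e2 : ‖P (v - Q v)‖ ≤ c * ‖v - Q v‖ := by
      have h := hAT (v - Q v)
      have hz : Q (v - Q v) = 0 := by rw [map_sub, hQ2, sub_self]
      rw [hz, map_zero, sub_zero] at h
      exact h
    have e3 := proj_pyth Q hQ2 hQs v
    have hle : ‖P v - Q v‖ ^ 2 ≤ (c * ‖v‖) ^ 2 := by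
      rw [hdec v]
      nlinarith [norm_nonneg (P (v - Q v)), norm_nonneg (v - Q v), sq_nonneg (c * ‖v - Q v‖)]
    exact le_of_sq_le_sq'' (norm_nonneg _) (by positivity) hle
end Key

section Plumb
variable {a b c : ℕ}

lemma eLin_mul (A : Matrix (Fin a) (Fin b) ℝ) (B : Matrix (Fin b) (Fin c) ℝ)
    (v : EuclideanSpace ℝ (Fin c)) :
    Matrix.toEuclideanLin (A * B) v = Matrix.toEuclideanLin A (Matrix.toEuclideanLin B v) := by
  simp [Matrix.toEuclideanLin_apply, Matrix.mulVec_mulVec]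

lemma eLin_inner_transpose (A : Matrix (Fin a) (Fin b) ℝ) (u : EuclideanSpace ℝ (Fin a))
    (v : EuclideanSpace ℝ (Fin b)) :
    ⟪Matrix.toEuclideanLin Aᵀ u, v⟫ = ⟪u, Matrix.toEuclideanLin A v⟫ := by
  have h : (Aᵀ : Matrix (Fin b) (Fin a) ℝ) = Aᴴ := by ext i j; simp
  rw [h, Matrix.toEuclideanLin_conjTranspose_eq_adjoint, LinearMap.adjoint_inner_left]

lemma eLin_le_specNorm (A : Matrix (Fin a) (Fin b) ℝ) (v : EuclideanSpace ℝ (Fin b)) :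
    ‖Matrix.toEuclideanLin A v‖ ≤ specNorm A * ‖v‖ := by
  have := (LinearMap.toContinuousLinearMap (Matrix.toEuclideanLin A)).le_opNorm v
  simpa [specNorm] using this

lemma specNorm_nonneg (A : Matrix (Fin a) (Fin b) ℝ) : 0 ≤ specNorm A := norm_nonneg _

lemma specNorm_neg (A : Matrix (Fin a) (Fin b) ℝ) : specNorm (-A) = specNorm A := by
  unfold specNorm
  rw [map_neg, map_neg, norm_neg]

lemma specNorm_le_bound (A : Matrix (Fin a) (Fin b) ℝ) (c : ℝ) (hc : 0 ≤ c)
    (h : ∀ v, ‖Matrix.toEuclideanLin A v‖ ≤ c * ‖v‖) : specNorm A ≤ c := by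
  refine ContinuousLinearMap.opNorm_le_bound _ hc fun v => ?_
  simpa using h v

lemma eLin_sub_apply (A B : Matrix (Fin a) (Fin b) ℝ) (v : EuclideanSpace ℝ (Fin b)) :
    Matrix.toEuclideanLin (A - B) v = Matrix.toEuclideanLin A v - Matrix.toEuclideanLin B v := by
  rw [map_sub, LinearMap.sub_apply]

lemma rank_eq_finrank_range_eLin (A : Matrix (Fin a) (Fin b) ℝ) :
    A.rank = Module.finrank ℝ (LinearMap.range (Matrix.toEuclideanLin A)) := by
  rw [Matrix.toEuclideanLin_eq_toLin]
  exact Matrix.rank_eq_finrank_range_toLin A _ _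

end Plumb

/-- One-sided version of the main theorem. -/
lemma main_half {d k : ℕ}
    (X Y : Matrix (Fin d) (Fin k) ℝ) (hrank : X.rank = Y.rank)
    (Xp : Matrix (Fin k) (Fin d) ℝ) (Yp : Matrix (Fin k) (Fin d) ℝ)
    (hXp : IsMoorePenrose X Xp) (hYp : IsMoorePenrose Y Yp) :
    specNorm (X * Xp - Y * Yp) ≤ specNorm Xp * specNorm (X - Y) := by
  obtain ⟨hX1, -, hX3, -⟩ := hXp
  obtain ⟨hY1, -, hY3, -⟩ := hYp
  set c : ℝ := specNorm Xp * specNorm (X - Y) with hcdef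
  have hc : 0 ≤ c := mul_nonneg (specNorm_nonneg _) (specNorm_nonneg _)
  -- matrix facts
  have hPidem : (X * Xp) * (X * Xp) = X * Xp := by
    calc (X * Xp) * (X * Xp) = (X * Xp * X) * Xp := (Matrix.mul_assoc (X * Xp) X Xp).symm
      _ = X * Xp := by rw [hX1]
  have hQidem : (Y * Yp) * (Y * Yp) = Y * Yp := by
    calc (Y * Yp) * (Y * Yp) = (Y * Yp * Y) * Yp := (Matrix.mul_assoc (Y * Yp) Y Yp).symm
      _ = Y * Yp := by rw [hY1]
  have hArank : (X * Xp).rank = (Y * Yp).rank := by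
    have h1 : (X * Xp).rank = X.rank := by
      refine le_antisymm (Matrix.rank_mul_le_left X Xp) ?_
      conv_lhs => rw [← hX1]
      exact Matrix.rank_mul_le_left (X * Xp) X
    have h2 : (Y * Yp).rank = Y.rank := by
      refine le_antisymm (Matrix.rank_mul_le_left Y Yp) ?_
      conv_lhs => rw [← hY1]
      exact Matrix.rank_mul_le_left (Y * Yp) Y
    rw [h1, h2, hrank]
  -- pass to operators
  set P : EuclideanSpace ℝ (Fin d) →L[ℝ] EuclideanSpace ℝ (Fin d) :=
    LinearMap.toContinuousLinearMap (Matrix.toEuclideanLin (X * Xp)) with hPdef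
  set Q : EuclideanSpace ℝ (Fin d) →L[ℝ] EuclideanSpace ℝ (Fin d) :=
    LinearMap.toContinuousLinearMap (Matrix.toEuclideanLin (Y * Yp)) with hQdef
  have hPapp : ∀ v, P v = Matrix.toEuclideanLin (X * Xp) v := fun _ => rfl
  have hQapp : ∀ v, Q v = Matrix.toEuclideanLin (Y * Yp) v := fun _ => rfl
  have hP2 : ∀ v, P (P v) = P v := by
    intro v
    simp only [hPapp]
    rw [← eLin_mul, hPidem]
  have hQ2 : ∀ v, Q (Q v) = Q v := by
    intro v
    simp only [hQapp]
    rw [← eLin_mul, hQidem]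
  have hPs : ∀ u v, ⟪P u, v⟫ = ⟪u, P v⟫ := by
    intro u v
    simp only [hPapp]
    rw [← eLin_inner_transpose, hX3]
  have hQs : ∀ u v, ⟪Q u, v⟫ = ⟪u, Q v⟫ := by
    intro u v
    simp only [hQapp]
    rw [← eLin_inner_transpose, hY3]
  have hrank' : Module.finrank ℝ (LinearMap.range
        (P : EuclideanSpace ℝ (Fin d) →ₗ[ℝ] EuclideanSpace ℝ (Fin d))) =
      Module.finrank ℝ (LinearMap.range
        (Q : EuclideanSpace ℝ (Fin d) →ₗ[ℝ] EuclideanSpace ℝ (Fin d))) := by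
    have hPc : (P : EuclideanSpace ℝ (Fin d) →ₗ[ℝ] EuclideanSpace ℝ (Fin d)) =
        Matrix.toEuclideanLin (X * Xp) := LinearMap.coe_toContinuousLinearMap _
    have hQc : (Q : EuclideanSpace ℝ (Fin d) →ₗ[ℝ] EuclideanSpace ℝ (Fin d)) =
        Matrix.toEuclideanLin (Y * Yp) := LinearMap.coe_toContinuousLinearMap _
    rw [hPc, hQc, ← rank_eq_finrank_range_eLin, ← rank_eq_finrank_range_eLin]
    exact_mod_cast congrArg (fun n : ℕ => n) hArank
  -- the bound for (I - Q) P
  have hA : ∀ v, ‖P v - Q (P v)‖ ≤ c * ‖v‖ := by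
    intro v
    have hmid : X * Xp - Y * Yp * (X * Xp) = (X - Y) * Xp - Y * Yp * ((X - Y) * Xp) := by
      have h4 : Y * Yp * (Y * Xp) = Y * Xp := by rw [← Matrix.mul_assoc, hY1]
      rw [Matrix.sub_mul, Matrix.mul_sub, h4]
      abel
    set u : EuclideanSpace ℝ (Fin d) := Matrix.toEuclideanLin ((X - Y) * Xp) v with hu
    have hval : P v - Q (P v) = u - Q u := by
      simp only [hPapp, hQapp, hu]
      rw [← eLin_mul, ← eLin_mul, ← eLin_sub_apply, ← eLin_sub_apply, hmid]
    rw [hval]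
    have h1 : ‖u - Q u‖ ≤ ‖u‖ := Proj9Aux.proj_contract' Q hQ2 hQs u
    have h2 : ‖u‖ ≤ specNorm (X - Y) * ‖Matrix.toEuclideanLin Xp v‖ := by
      rw [hu, eLin_mul]
      exact eLin_le_specNorm _ _
    have h3 : ‖Matrix.toEuclideanLin Xp v‖ ≤ specNorm Xp * ‖v‖ := eLin_le_specNorm _ _
    calc ‖u - Q u‖ ≤ ‖u‖ := h1
      _ ≤ specNorm (X - Y) * ‖Matrix.toEuclideanLin Xp v‖ := h2
      _ ≤ specNorm (X - Y) * (specNorm Xp * ‖v‖) :=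
          mul_le_mul_of_nonneg_left h3 (specNorm_nonneg _)
      _ = c * ‖v‖ := by rw [hcdef]; ring
  -- conclude via key lemma
  refine specNorm_le_bound _ c hc fun v => ?_
  have : Matrix.toEuclideanLin (X * Xp - Y * Yp) v = P v - Q v := by
    rw [map_sub, LinearMap.sub_apply, hPapp, hQapp]
  rw [this]
  exact Proj9Aux.key_lemma P Q hP2 hQ2 hPs hQs hrank' c hc hA v

end Proj9Aux

/-- **Perturbation of projection distance.** Let `X, Y ∈ ℝ^{d×k}` with
`rank X = rank Y`, and let `X†, Y†` be their Moore–Penrose pseudoinverses, so that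
`P_X = X X†` and `P_Y = Y Y†` are the orthogonal projectors onto `range X` and `range Y`.
Then `dist(X,Y) = ‖P_X − P_Y‖₂ ≤ min{‖X†‖₂, ‖Y†‖₂} · ‖X − Y‖₂`. -/
theorem projection_distance_perturbation {d k : ℕ}
    (X Y : Matrix (Fin d) (Fin k) ℝ) (hrank : X.rank = Y.rank)
    (Xp : Matrix (Fin k) (Fin d) ℝ) (Yp : Matrix (Fin k) (Fin d) ℝ)
    (hXp : IsMoorePenrose X Xp) (hYp : IsMoorePenrose Y Yp) :
    specNorm (X * Xp - Y * Yp) ≤ min (specNorm Xp) (specNorm Yp) * specNorm (X - Y) := by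
  rw [min_mul_of_nonneg _ _ (Proj9Aux.specNorm_nonneg (X - Y))]
  refine le_min (Proj9Aux.main_half X Y hrank Xp Yp hXp hYp) ?_
  have h1 : specNorm (X * Xp - Y * Yp) = specNorm (Y * Yp - X * Xp) := by
    rw [← Proj9Aux.specNorm_neg (Y * Yp - X * Xp), neg_sub]
  have h2 : specNorm (X - Y) = specNorm (Y - X) := by
    rw [← Proj9Aux.specNorm_neg (Y - X), neg_sub]
  rw [h1, h2]
  exact Proj9Aux.main_half Y X hrank.symm Yp Xp hYp hXp
end

section
/- Let S be a multiset of K indices drawn i.i.d. from {1,...,m} with probabilities p_1,...,p_m summing to 1, and let Z^{(1)},...,Z^{(m)} ∈ ℝ^{d×r} have orthonormal columns. Define the zero-mean random matrix S_t = (1/K)∑_{i∈S} Z^{(i)} − ∑_{i=1}^m p_i Z^{(i)}. Then ‖E[S_t S_tᵀ]‖₂ ≤ (1/K)∑_{i≠j} p_i p_j + ∑_i p_i² + 1/K. -/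
open Matrix Finset

/-!
Write `μ = ∑ pᵢ Z⁽ⁱ⁾` and `V = ∑ pᵢ Z⁽ⁱ⁾Z⁽ⁱ⁾ᵀ`. Distinct draws are independent, so the sampled
matrices `X_k = Z⁽ᶠ⁽ᵏ⁾⁾` satisfy `E[X_k X_lᵀ] = μμᵀ` for `k ≠ l`, while `E[X_k X_kᵀ] = V`;
expanding the centred sample mean gives the exact identity `E[S_t S_tᵀ] = K⁻¹ (V - μμᵀ)`, valid
for any bilinear form in place of `(A, C) ↦ A Cᵀ`. Orthonormal columns give `‖Z⁽ⁱ⁾‖₂ ≤ 1`, so by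
convexity `‖V‖₂ ≤ 1` and `‖μμᵀ‖₂ ≤ 1`, whence `‖E[S_t S_tᵀ]‖₂ ≤ 2/K`. Since
`∑_{i≠j} pᵢpⱼ + ∑ pᵢ² = (∑ pᵢ)² = 1`, the right-hand side equals `2/K + (1 - 1/K) ∑ pᵢ² ≥ 2/K`.
-/

open scoped Matrix.Norms.L2Operator

section IidExpectation

variable {R M N P : Type*} [CommSemiring R] [AddCommMonoid M] [Module R M]
  [AddCommMonoid N] [Module R N] [AddCommMonoid P] [Module R P]
  {ι α : Type*} [Fintype ι] [DecidableEq ι] [Fintype α] (p : α → R)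

noncomputable def iidExpectation : ((ι → α) → M) →ₗ[R] M where
  toFun F := ∑ f, (∏ j, p (f j)) • F f
  map_add' F G := by simp only [Pi.add_apply, smul_add, sum_add_distrib]
  map_smul' c F := by simp only [Pi.smul_apply, smul_comm _ c, smul_sum, RingHom.id_apply]

theorem iidExpectation_apply (F : (ι → α) → M) :
    iidExpectation p F = ∑ f, (∏ j, p (f j)) • F f := rfl

theorem iidExpectation_map (L : M →ₗ[R] N) (F : (ι → α) → M) :
    iidExpectation p (fun f => L (F f)) = L (iidExpectation p F) := by
  simp only [iidExpectation_apply, map_sum, map_smul]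

theorem iidExpectation_sum {κ : Type*} (s : Finset κ) (F : κ → (ι → α) → M) :
    iidExpectation p (fun f => ∑ k ∈ s, F k f) = ∑ k ∈ s, iidExpectation p (F k) := by
  simp only [iidExpectation_apply, smul_sum]
  exact sum_comm

variable {p}

theorem sum_prod_filter_forall_mem_eq [DecidableEq α] (hp : ∑ x, p x = 1) (S : Finset ι)
    (c : ι → α) : ∑ f : ι → α with ∀ j ∈ S, f j = c j, ∏ j, p (f j) = ∏ j ∈ S, p (c j) := by
  have hcyl : ({f | ∀ j ∈ S, f j = c j} : Finset (ι → α)) =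
      Fintype.piFinset fun j => if j ∈ S then {c j} else univ := by
    ext f
    simp only [mem_filter, mem_univ, true_and, Fintype.mem_piFinset]
    refine forall_congr' fun j => ?_
    split_ifs <;> simp [*]
  rw [hcyl, ← prod_univ_sum, ← Fintype.prod_ite_mem S]
  exact Fintype.prod_congr _ _ fun j => by split_ifs <;> simp [hp]

theorem iidExpectation_const (hp : ∑ x, p x = 1) (c : M) :
    iidExpectation p (fun _ : ι → α => c) = c := by
  rw [iidExpectation_apply, ← sum_smul, ← Fintype.prod_sum fun _ : ι => p]
  simp [hp]

theorem sum_prod_filter_apply_eq [DecidableEq α] (hp : ∑ x, p x = 1) (k : ι) (i : α) :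
    ∑ f : ι → α with f k = i, ∏ j, p (f j) = p i := by
  simpa using sum_prod_filter_forall_mem_eq hp {k} fun _ => i

theorem sum_prod_filter_apply_apply_eq [DecidableEq α] (hp : ∑ x, p x = 1) {k l : ι}
    (hkl : k ≠ l) (i i' : α) :
    ∑ f : ι → α with (f k, f l) = (i, i'), ∏ j, p (f j) = p i * p i' := by
  simpa [hkl, hkl.symm, prod_pair hkl, Function.update_of_ne hkl.symm] using
    sum_prod_filter_forall_mem_eq hp {k, l} (Function.update (fun _ => i') k i)

theorem iidExpectation_comp_eval [DecidableEq α] (hp : ∑ x, p x = 1) (k : ι) (g : α → M) :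
    iidExpectation p (fun f : ι → α => g (f k)) = ∑ i, p i • g i := by
  rw [iidExpectation_apply, ← sum_fiberwise univ (fun f : ι → α => f k)]
  refine sum_congr rfl fun i _ => ?_
  rw [sum_congr rfl fun f hf => by rw [(mem_filter.1 hf).2], ← sum_smul,
    sum_prod_filter_apply_eq hp]

theorem iidExpectation_comp_eval_eval_of_ne [DecidableEq α] (hp : ∑ x, p x = 1) {k l : ι}
    (hkl : k ≠ l) (g : α → α → M) :
    iidExpectation p (fun f : ι → α => g (f k) (f l)) = ∑ i, ∑ i', (p i * p i') • g i i' := by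
  rw [iidExpectation_apply, ← sum_fiberwise univ (fun f : ι → α => (f k, f l)),
    Fintype.sum_prod_type]
  refine sum_congr rfl fun i _ => sum_congr rfl fun i' _ => ?_
  rw [sum_congr rfl fun f hf => by
      obtain ⟨hi, hi'⟩ := Prod.mk.inj (mem_filter.1 hf).2
      rw [hi, hi'],
    ← sum_smul, sum_prod_filter_apply_apply_eq hp hkl]

theorem iidExpectation_bilin_of_ne [DecidableEq α] (hp : ∑ x, p x = 1) {k l : ι} (hkl : k ≠ l)
    (B : M →ₗ[R] N →ₗ[R] P) (g : α → M) (h : α → N) :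
    iidExpectation p (fun f => B (g (f k)) (h (f l))) = B (∑ i, p i • g i) (∑ i, p i • h i) := by
  rw [iidExpectation_comp_eval_eval_of_ne hp hkl fun i i' => B (g i) (h i')]
  simp only [map_sum, map_smul, LinearMap.sum_apply, LinearMap.smul_apply, smul_sum, smul_smul]
  rw [sum_comm]
  exact sum_congr rfl fun i' _ => sum_congr rfl fun i _ => by rw [mul_comm]

theorem iidExpectation_sum_comp_eval [DecidableEq α] (hp : ∑ x, p x = 1) (g : α → M) :
    iidExpectation p (fun f : ι → α => ∑ k, g (f k)) = (Fintype.card ι : R) • ∑ i, p i • g i := by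
  rw [iidExpectation_sum]
  simp_rw [iidExpectation_comp_eval hp]
  rw [sum_const, card_univ, Nat.cast_smul_eq_nsmul]

end IidExpectation

section SampleMean

variable {𝕜 M P : Type*} [Field 𝕜] [AddCommGroup M] [Module 𝕜 M] [AddCommGroup P] [Module 𝕜 P]
  {ι α : Type*} [Fintype ι] [DecidableEq ι] [Fintype α] [DecidableEq α] {p : α → 𝕜}

theorem iidExpectation_bilin_sum_sum (hp : ∑ x, p x = 1) (B : M →ₗ[𝕜] M →ₗ[𝕜] P) (g : α → M) :
    iidExpectation p (fun f : ι → α => B (∑ k, g (f k)) (∑ k, g (f k))) =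
      (Fintype.card ι : 𝕜) • (∑ i, p i • B (g i) (g i) - B (∑ i, p i • g i) (∑ i, p i • g i)) +
        (Fintype.card ι : 𝕜) ^ 2 • B (∑ i, p i • g i) (∑ i, p i • g i) := by
  set μ := ∑ i, p i • g i
  set V := ∑ i, p i • B (g i) (g i)
  have hrow : ∀ k : ι, ∑ l, iidExpectation p (fun f : ι → α => B (g (f l)) (g (f k))) =
      (Fintype.card ι : 𝕜) • B μ μ + (V - B μ μ) := by
    intro k
    have hterm : ∀ l, iidExpectation p (fun f : ι → α => B (g (f l)) (g (f k))) =
        B μ μ + if l = k then V - B μ μ else 0 := by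
      intro l
      split_ifs with hlk
      · subst hlk
        rw [iidExpectation_comp_eval hp l fun i => B (g i) (g i), add_sub_cancel]
      · rw [iidExpectation_bilin_of_ne hp hlk, add_zero]
    simp only [hterm, sum_add_distrib, sum_const, card_univ, sum_ite_eq', mem_univ, if_true,
      Nat.cast_smul_eq_nsmul]
  simp only [map_sum, LinearMap.sum_apply]
  simp_rw [iidExpectation_sum, hrow]
  rw [sum_const, card_univ, ← Nat.cast_smul_eq_nsmul 𝕜]
  module

theorem iidExpectation_bilin_sampleMean_sub (hp : ∑ x, p x = 1)
    (hn : (Fintype.card ι : 𝕜) ≠ 0) (B : M →ₗ[𝕜] M →ₗ[𝕜] P) (g : α → M) :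
    iidExpectation p (fun f : ι → α =>
      B ((Fintype.card ι : 𝕜)⁻¹ • ∑ k, g (f k) - ∑ i, p i • g i)
        ((Fintype.card ι : 𝕜)⁻¹ • ∑ k, g (f k) - ∑ i, p i • g i)) =
      (Fintype.card ι : 𝕜)⁻¹ • (∑ i, p i • B (g i) (g i) - B (∑ i, p i • g i) (∑ i, p i • g i)) := by
  set n := (Fintype.card ι : 𝕜)
  set μ := ∑ i, p i • g i
  set Y := fun f : ι → α => ∑ k, g (f k)
  have hY : iidExpectation p Y = n • μ := iidExpectation_sum_comp_eval hp g
  have hYμ : iidExpectation p (fun f => B (Y f) μ) = n • B μ μ := by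
    simpa only [LinearMap.flip_apply, hY, map_smul, LinearMap.smul_apply] using
      iidExpectation_map p (B.flip μ) Y
  have hμY : iidExpectation p (fun f => B μ (Y f)) = n • B μ μ := by
    rw [iidExpectation_map p (B μ) Y, hY, map_smul]
  have hexpand : (fun f => B (n⁻¹ • Y f - μ) (n⁻¹ • Y f - μ)) =
      (n⁻¹ ^ 2) • (fun f => B (Y f) (Y f)) - n⁻¹ • (fun f => B (Y f) μ) -
        n⁻¹ • (fun f => B μ (Y f)) + fun _ => B μ μ := by
    funext f
    simp only [Pi.add_apply, Pi.sub_apply, Pi.smul_apply, map_sub, map_smul, LinearMap.sub_apply,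
      LinearMap.smul_apply]
    module
  rw [hexpand, map_add, map_sub, map_sub, map_smul, map_smul, map_smul,
    iidExpectation_bilin_sum_sum hp, hYμ, hμY, iidExpectation_const hp]
  match_scalars <;> field_simp <;> ring

end SampleMean

section MulTranspose

variable {R : Type*} [CommSemiring R] {m n : Type*} [Fintype n]

def mulTransposeBilin : Matrix m n R →ₗ[R] Matrix m n R →ₗ[R] Matrix m m R :=
  LinearMap.mk₂ R (fun A C => A * Cᵀ) (fun _ _ _ => Matrix.add_mul _ _ _)
    (fun _ _ _ => Matrix.smul_mul _ _ _)
    (fun _ _ _ => by rw [transpose_add, Matrix.mul_add])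
    (fun _ _ _ => by rw [transpose_smul, Matrix.mul_smul])

theorem mulTransposeBilin_apply (A C : Matrix m n R) : mulTransposeBilin A C = A * Cᵀ := rfl

end MulTranspose

section L2OpNorm

variable {m n : Type*} [Fintype n]

theorem specNorm_eq_l2_opNorm {a b : ℕ} (A : Matrix (Fin a) (Fin b) ℝ) : specNorm A = ‖A‖ := rfl

theorem l2_opNorm_le_one_of_transpose_mul_self_eq_one [Fintype m] [DecidableEq n]
    {Z : Matrix m n ℝ} (hZ : Zᵀ * Z = 1) : ‖Z‖ ≤ 1 := by
  have hsq : ‖Z‖ * ‖Z‖ ≤ 1 := by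
    rw [← l2_opNorm_conjTranspose_mul_self, conjTranspose_eq_transpose_of_trivial, hZ,
      ← l2_opNorm_toEuclideanCLM, map_one]
    exact ContinuousLinearMap.norm_id_le
  nlinarith [norm_nonneg Z]

theorem l2_opNorm_mul_transpose_self_le_one [Fintype m] [DecidableEq m] [DecidableEq n]
    {A : Matrix m n ℝ} (hA : ‖A‖ ≤ 1) : ‖A * Aᵀ‖ ≤ 1 := by
  rw [← conjTranspose_eq_transpose_of_trivial]
  calc ‖A * Aᴴ‖ ≤ ‖A‖ * ‖Aᴴ‖ := l2_opNorm_mul _ _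
    _ = ‖A‖ * ‖A‖ := by rw [l2_opNorm_conjTranspose]
    _ ≤ 1 := by nlinarith [norm_nonneg A]

end L2OpNorm

theorem norm_sum_smul_le_one {E ι : Type*} [SeminormedAddCommGroup E] [NormedSpace ℝ E]
    [Fintype ι] {w : ι → ℝ} (hw : ∀ i, 0 ≤ w i) (hw₁ : ∑ i, w i = 1) {x : ι → E}
    (hx : ∀ i, ‖x i‖ ≤ 1) : ‖∑ i, w i • x i‖ ≤ 1 :=
  mem_closedBall_zero_iff.1 <| (convex_closedBall 0 1).sum_mem (fun i _ => hw i) hw₁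
    fun i _ => mem_closedBall_zero_iff.2 (hx i)

theorem sum_sum_erase_mul_add_sum_sq {R ι : Type*} [CommSemiring R] [Fintype ι] [DecidableEq ι]
    (p : ι → R) : ∑ i, ∑ j ∈ univ.erase i, p i * p j + ∑ i, p i ^ 2 = (∑ i, p i) ^ 2 := by
  rw [sq, sum_mul_sum, ← sum_add_distrib]
  refine sum_congr rfl fun i _ => ?_
  rw [← add_sum_erase _ _ (mem_univ i), sq, add_comm]

/-- Let `K` indices be drawn i.i.d. from `{1,…,m}` with probabilities
`p_1,…,p_m` summing to `1`, and let `Z⁽¹⁾,…,Z⁽ᵐ⁾ ∈ ℝ^{d×r}` have orthonormal columns.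
For a sampled tuple `f`, set `S_t(f) = (1/K) ∑_k Z⁽ᶠ⁽ᵏ⁾⁾ − ∑_i p_i Z⁽ⁱ⁾`.  Then the
expectation `E[S_t S_tᵀ]` (the sum over tuples `f` weighted by `∏_k p_{f(k)}`) satisfies
`‖E[S_t S_tᵀ]‖₂ ≤ (1/K) ∑_{i ≠ j} p_i p_j + ∑_i p_i² + 1/K`. -/
theorem sampling_variance_bound {d r m K : ℕ} (hK : 0 < K)
    (p : Fin m → ℝ) (hp : ∀ i, 0 ≤ p i) (hpsum : ∑ i, p i = 1)
    (Z : Fin m → Matrix (Fin d) (Fin r) ℝ)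
    (hZ : ∀ i, (Z i)ᵀ * Z i = 1) :
    specNorm (∑ f : Fin K → Fin m,
        (∏ k, p (f k)) •
          ((((K : ℝ)⁻¹ • ∑ k, Z (f k)) - ∑ i, p i • Z i) *
            (((K : ℝ)⁻¹ • ∑ k, Z (f k)) - ∑ i, p i • Z i)ᵀ)) ≤
      (K : ℝ)⁻¹ * (∑ i, ∑ j ∈ Finset.univ.erase i, p i * p j) +
        (∑ i, (p i) ^ 2) + (K : ℝ)⁻¹ := by
  have hvar := iidExpectation_bilin_sampleMean_sub (ι := Fin K) hpsum
    (by simpa using hK.ne') mulTransposeBilin Z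
  simp only [Fintype.card_fin, mulTransposeBilin_apply] at hvar
  have hZ₁ : ∀ i, ‖Z i‖ ≤ 1 := fun i => l2_opNorm_le_one_of_transpose_mul_self_eq_one (hZ i)
  have hV : ‖∑ i, p i • (Z i * (Z i)ᵀ)‖ ≤ 1 :=
    norm_sum_smul_le_one hp hpsum fun i => l2_opNorm_mul_transpose_self_le_one (hZ₁ i)
  have hM : ‖(∑ i, p i • Z i) * (∑ i, p i • Z i)ᵀ‖ ≤ 1 :=
    l2_opNorm_mul_transpose_self_le_one (norm_sum_smul_le_one hp hpsum hZ₁)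
  have hsq := sum_sum_erase_mul_add_sum_sq p
  rw [hpsum, one_pow] at hsq
  have hKinv : (K : ℝ)⁻¹ ≤ 1 := inv_le_one_of_one_le₀ (by exact_mod_cast hK)
  have hq : 0 ≤ ∑ i, p i ^ 2 := sum_nonneg fun i _ => sq_nonneg (p i)
  calc _ = ‖(K : ℝ)⁻¹ • (∑ i, p i • (Z i * (Z i)ᵀ) -
        (∑ i, p i • Z i) * (∑ i, p i • Z i)ᵀ)‖ := by
        rw [specNorm_eq_l2_opNorm, ← hvar, iidExpectation_apply]
    _ ≤ (K : ℝ)⁻¹ * (1 + 1) := by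
        rw [norm_smul, Real.norm_of_nonneg (by positivity)]
        gcongr
        exact (norm_sub_le _ _).trans (add_le_add hV hM)
    _ ≤ _ := by nlinarith [mul_nonneg (sub_nonneg.2 hKinv) hq]
end
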